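/- arXiv:math/0609077 — 8 statements merged into one kernel-verified Lean document; each statement's English description precedes it below -/
import Mathlib

section
/- Let f, g : ℝ → ℝ be smooth functions. Then for every p ≥ 1, the p-th derivative of the composition f ∘ g at x equals p! times the sum over m ≥ 0 of (f^(m)(g(x))/m!) times the sum over all tuples (α₁,…,α_m) of positive integers with α₁+⋯+α_m = p of the product over i of g^(α_i)(x)/α_i! (Faà di Bruno's formula). -/
open scoped Nat
open Function


/-- Compositions of `n` into `m` positive parts. -/
private def P (m n : ℕ) : Finset (Fin m → ℕ) :=
  (Finset.Nat.antidiagonalTuple m n).filter (fun α => ∀ i, 0 < α i)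

private lemma mem_P {m n : ℕ} {α : Fin m → ℕ} :
    α ∈ P m n ↔ (∑ i, α i) = n ∧ ∀ i, 0 < α i := by
  simp [P, Finset.Nat.mem_antidiagonalTuple]

private lemma P_empty_of_lt {m n : ℕ} (h : n < m) : P m n = ∅ := by
  ext α
  simp only [Finset.notMem_empty, iff_false, mem_P, not_and]
  intro hs hpos
  have : m ≤ n := by
    calc m = ∑ _i : Fin m, 1 := by simp
    _ ≤ ∑ i, α i := Finset.sum_le_sum (fun i _ => hpos i)
    _ = n := hs
  omega

private lemma P_zero {n : ℕ} (hn : n ≠ 0) : P 0 n = ∅ := by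
  ext α
  simp only [Finset.notMem_empty, iff_false, mem_P, not_and]
  intro hs
  simp at hs
  omega

private lemma sum_comp_perm (m n : ℕ) (σ : Equiv.Perm (Fin m)) (F : (Fin m → ℕ) → ℝ) :
    ∑ β ∈ P m n, F (β ∘ σ) = ∑ β ∈ P m n, F β := by
  refine Finset.sum_nbij' (i := fun β => β ∘ σ) (j := fun β => β ∘ σ.symm) ?_ ?_ ?_ ?_ ?_
  · intro β hβ
    rw [mem_P] at hβ ⊢
    exact ⟨by rw [← hβ.1]; exact Equiv.sum_comp σ β, fun i => hβ.2 _⟩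
  · intro β hβ
    rw [mem_P] at hβ ⊢
    exact ⟨by rw [← hβ.1]; exact Equiv.sum_comp σ.symm β, fun i => hβ.2 _⟩
  · intro β _; funext i; simp
  · intro β _; funext i; simp
  · intro β _; rfl

/-- number of parts equal to 1 -/
private def t1 {m : ℕ} (β : Fin m → ℕ) : ℕ := (Finset.univ.filter (fun j => β j = 1)).card

private lemma t1_eq {m : ℕ} (β : Fin m → ℕ) :
    (t1 β : ℝ) = ∑ j, if β j = 1 then (1:ℝ) else 0 := by
  rw [Finset.sum_ite, Finset.sum_const, Finset.sum_const]
  simp [t1]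

private lemma symmetrize (n m : ℕ) (F : (Fin (m+1) → ℕ) → ℝ)
    (hF : ∀ (σ : Equiv.Perm (Fin (m+1))) β, F (β ∘ σ) = F β) :
    ((m+1 : ℕ) : ℝ) * ∑ β ∈ P (m+1) n, (if β 0 = 1 then F β else 0)
      = ∑ β ∈ P (m+1) n, (t1 β : ℝ) * F β := by
  have key : ∀ j : Fin (m+1), ∑ β ∈ P (m+1) n, (if β j = 1 then F β else 0)
      = ∑ β ∈ P (m+1) n, (if β 0 = 1 then F β else 0) := by
    intro j
    have := sum_comp_perm (m+1) n (Equiv.swap 0 j)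
      (fun β => if β 0 = 1 then F β else 0)
    rw [← this]
    refine Finset.sum_congr rfl (fun β _ => ?_)
    simp only [Function.comp_apply, Equiv.swap_apply_left, hF]
  calc ((m+1 : ℕ) : ℝ) * ∑ β ∈ P (m+1) n, (if β 0 = 1 then F β else 0)
      = ∑ _j : Fin (m+1), ∑ β ∈ P (m+1) n, (if β 0 = 1 then F β else 0) := by
        rw [Finset.sum_const, Finset.card_univ, Fintype.card_fin, nsmul_eq_mul]
    _ = ∑ j : Fin (m+1), ∑ β ∈ P (m+1) n, (if β j = 1 then F β else 0) := by
        exact Finset.sum_congr rfl (fun j _ => (key j).symm)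
    _ = ∑ β ∈ P (m+1) n, ∑ j : Fin (m+1), (if β j = 1 then F β else 0) := Finset.sum_comm
    _ = ∑ β ∈ P (m+1) n, (t1 β : ℝ) * F β := by
        refine Finset.sum_congr rfl (fun β _ => ?_)
        rw [t1_eq, Finset.sum_mul]
        refine Finset.sum_congr rfl (fun j _ => ?_)
        by_cases h : β j = 1 <;> simp [h]

private lemma stepA (p m : ℕ) (G : (Fin (m+1) → ℕ) → ℝ) :
    ∑ α ∈ P m p, (p ! : ℝ) / (m ! * ∏ i, ((α i)! : ℝ)) * G (Fin.cons 1 α)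
    = ∑ β ∈ P (m+1) (p+1),
        (if β 0 = 1 then (p ! : ℝ) / (m ! * ∏ j, ((β j)! : ℝ)) * G β else 0) := by
  rw [← Finset.sum_filter]
  refine Finset.sum_nbij' (i := fun α => Fin.cons 1 α) (j := fun β => Fin.tail β) ?_ ?_ ?_ ?_ ?_
  · intro α hα
    rw [mem_P] at hα
    simp only [Finset.mem_filter, mem_P]
    refine ⟨⟨?_, ?_⟩, ?_⟩
    · rw [Fin.sum_cons, hα.1, add_comm]
    · intro i
      refine Fin.cases ?_ ?_ i
      · simp
      · intro j; simpa using hα.2 j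
    · simp
  · intro β hβ
    simp only [Finset.mem_filter, mem_P] at hβ
    rw [mem_P]
    constructor
    · have := hβ.1.1
      rw [Fin.sum_univ_succ, hβ.2] at this
      have h1 : ∑ i : Fin m, Fin.tail β i = p := by
        simp only [Fin.tail]; omega
      exact h1
    · intro i; exact hβ.1.2 i.succ
  · intro α _; exact Fin.tail_cons _ _
  · intro β hβ
    simp only [Finset.mem_filter] at hβ
    have h := Fin.cons_self_tail β
    rw [hβ.2] at h
    exact h
  · intro α hα
    congr 1
    congr 2
    rw [Fin.prod_univ_succ]
    simp

private lemma stepB (p m : ℕ) (G : (Fin m → ℕ) → ℝ) :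
    ∑ α ∈ P m p, ∑ k : Fin m,
        (p ! : ℝ) / (m ! * ∏ i, ((α i)! : ℝ)) * G (update α k (α k + 1))
    = ∑ β ∈ P m (p+1), ∑ k : Fin m,
        (if 2 ≤ β k then ((β k : ℝ) * p !) / (m ! * ∏ j, ((β j)! : ℝ)) * G β else 0) := by
  rw [← Finset.sum_product', ← Finset.sum_product']
  rw [← Finset.sum_filter_add_sum_filter_not ((P m (p+1)) ×ˢ Finset.univ)
    (fun y => 2 ≤ y.1 y.2)]
  have hzero : ∑ y ∈ ((P m (p+1)) ×ˢ Finset.univ).filter (fun y => ¬ 2 ≤ y.1 y.2),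
      (if 2 ≤ y.1 y.2 then ((y.1 y.2 : ℝ) * p !) / (m ! * ∏ j, ((y.1 j)! : ℝ)) * G y.1 else 0)
      = 0 := by
    refine Finset.sum_eq_zero (fun y hy => ?_)
    simp only [Finset.mem_filter] at hy
    rw [if_neg hy.2]
  rw [hzero, add_zero]
  refine Finset.sum_nbij' (i := fun x => (update x.1 x.2 (x.1 x.2 + 1), x.2))
    (j := fun y => (update y.1 y.2 (y.1 y.2 - 1), y.2)) ?_ ?_ ?_ ?_ ?_
  · rintro ⟨α, k⟩ hx
    simp only [Finset.mem_product, mem_P] at hx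
    obtain ⟨⟨hs, hpos⟩, -⟩ := hx
    simp only [Finset.mem_filter, Finset.mem_product, mem_P]
    refine ⟨⟨⟨?_, ?_⟩, Finset.mem_univ _⟩, ?_⟩
    · rw [Finset.sum_update_of_mem (Finset.mem_univ k)]
      rw [← Finset.sum_erase_add _ _ (Finset.mem_univ k)] at hs
      simp only [Finset.sdiff_singleton_eq_erase]
      omega
    · intro i
      rcases eq_or_ne i k with rfl | hik
      · simp
      · simpa [hik] using hpos i
    · have := hpos k
      simp
      omega
  · rintro ⟨β, k⟩ hy
    simp only [Finset.mem_filter, Finset.mem_product, mem_P] at hy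
    obtain ⟨⟨⟨hs, hpos⟩, -⟩, hk⟩ := hy
    simp only [Finset.mem_product, mem_P]
    refine ⟨⟨?_, ?_⟩, Finset.mem_univ _⟩
    · rw [Finset.sum_update_of_mem (Finset.mem_univ k)]
      rw [← Finset.sum_erase_add _ _ (Finset.mem_univ k)] at hs
      simp only [Finset.sdiff_singleton_eq_erase]
      omega
    · intro i
      rcases eq_or_ne i k with rfl | hik
      · simp; omega
      · simpa [hik] using hpos i
  · rintro ⟨α, k⟩ _
    simp only [update_self, update_idem, Prod.mk.injEq]
    refine ⟨?_, trivial⟩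
    rw [Nat.add_sub_cancel]
    exact Function.update_eq_self k α
  · rintro ⟨β, k⟩ hy
    simp only [Finset.mem_filter, Finset.mem_product, mem_P] at hy
    simp only [update_self, update_idem, Prod.mk.injEq]
    refine ⟨?_, trivial⟩
    have : β k - 1 + 1 = β k := by omega
    rw [this]
    exact Function.update_eq_self k β
  · rintro ⟨α, k⟩ hx
    simp only [Finset.mem_product, mem_P] at hx
    obtain ⟨⟨hs, hpos⟩, -⟩ := hx
    dsimp only
    have h1 : update α k (α k + 1) k = α k + 1 := by simp
    rw [if_pos (by rw [h1]; have := hpos k; omega)]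
    have hfun : (fun j => ((update α k (α k + 1) j)! : ℝ))
        = update (fun i => ((α i)! : ℝ)) k (((α k + 1)! : ℝ)) := by
      funext j
      rcases eq_or_ne j k with rfl | h
      · simp
      · simp [h]
    have hprod : ∏ j, ((update α k (α k + 1) j)! : ℝ)
        = ((α k : ℝ) + 1) * ∏ i, ((α i)! : ℝ) := by
      rw [hfun, Finset.prod_update_of_mem (Finset.mem_univ k),
        ← Finset.prod_erase_mul _ _ (Finset.mem_univ k)]
      simp only [Finset.sdiff_singleton_eq_erase]
      push_cast [Nat.factorial_succ]
      ring
    rw [h1, hprod]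
    have hA : (0:ℝ) < ∏ i, ((α i)! : ℝ) :=
      Finset.prod_pos (fun i _ => by exact_mod_cast Nat.factorial_pos _)
    have hm : (0:ℝ) < (m ! : ℝ) := by exact_mod_cast Nat.factorial_pos m
    push_cast
    rw [div_mul_eq_mul_div, div_mul_eq_mul_div, div_eq_div_iff (by positivity) (by positivity)]
    ring

private lemma stepC (p m : ℕ) (G : (Fin m → ℕ) → ℝ) {β : Fin m → ℕ} (hβ : β ∈ P m (p+1)) :
    ∑ k : Fin m, (if 2 ≤ β k then ((β k : ℝ) * p !) / (m ! * ∏ j, ((β j)! : ℝ)) * G β else 0)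
    = (((p:ℝ) + 1 - (t1 β : ℝ)) * p !) / (m ! * ∏ j, ((β j)! : ℝ)) * G β := by
  rw [mem_P] at hβ
  obtain ⟨hs, hpos⟩ := hβ
  have hterm : ∀ k : Fin m,
      (if 2 ≤ β k then ((β k : ℝ) * p !) / (m ! * ∏ j, ((β j)! : ℝ)) * G β else 0)
      = (if 2 ≤ β k then (β k : ℝ) else 0)
          * ((p ! : ℝ) / (m ! * ∏ j, ((β j)! : ℝ)) * G β) := by
    intro k
    by_cases h : 2 ≤ β k
    · rw [if_pos h, if_pos h]; ring
    · rw [if_neg h, if_neg h, zero_mul]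
  rw [Finset.sum_congr rfl (fun k _ => hterm k), ← Finset.sum_mul]
  have hsplit : ∀ k : Fin m, (if 2 ≤ β k then (β k : ℝ) else 0)
      = (β k : ℝ) - (if β k = 1 then (1:ℝ) else 0) := by
    intro k
    have hk := hpos k
    by_cases h : β k = 1
    · rw [if_neg (by omega), if_pos h, h]; norm_num
    · rw [if_pos (by omega), if_neg h]; ring
  rw [Finset.sum_congr rfl (fun k _ => hsplit k), Finset.sum_sub_distrib, ← t1_eq]
  have hsum : ∑ k : Fin m, (β k : ℝ) = (p:ℝ) + 1 := by
    have := congrArg (Nat.cast (R := ℝ)) hs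
    push_cast at this
    simpa using this
  rw [hsum]
  ring

private lemma key : ∀ (p : ℕ) (G : (m : ℕ) → (Fin m → ℕ) → ℝ),
    (∀ (m : ℕ) (σ : Equiv.Perm (Fin m)) (α : Fin m → ℕ), G m (α ∘ σ) = G m α) →
    ∑ c : OrderedFinpartition p, G c.length c.partSize
      = ∑ m ∈ Finset.range (p+1), ∑ α ∈ P m p,
          (p ! : ℝ) / (m ! * ∏ i, ((α i)! : ℝ)) * G m α := by
  intro p
  induction p with
  | zero =>
    intro G hG
    haveI : Subsingleton (Fin 0 → ℕ) := ⟨fun a b => funext fun i => i.elim0⟩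
    have hP : P 0 0 = {fun _ => 0} := by
      ext α
      simp only [mem_P, Finset.mem_singleton]
      constructor
      · intro _; exact Subsingleton.elim _ _
      · intro _; exact ⟨by simp, fun i => i.elim0⟩
    rw [Fintype.sum_unique, Finset.sum_range_one, hP, Finset.sum_singleton]
    simp only [Nat.factorial_zero, Nat.cast_one, Finset.univ_eq_empty, Finset.prod_empty,
      mul_one, div_one, one_mul]
    show G 0 (OrderedFinpartition.atomic 0).partSize = G 0 (fun _ => 0)
    exact congrArg (G 0) (Subsingleton.elim _ _)
  | succ p ih =>
    intro G hG
    -- the two derived symmetric functions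
    set G1 : (m : ℕ) → (Fin m → ℕ) → ℝ := fun m α => G (m+1) (Fin.cons 1 α) with hG1def
    set G2 : (m : ℕ) → (Fin m → ℕ) → ℝ :=
      fun m α => ∑ k : Fin m, G m (update α k (α k + 1)) with hG2def
    have hG1 : ∀ (m : ℕ) (σ : Equiv.Perm (Fin m)) (α : Fin m → ℕ), G1 m (α ∘ σ) = G1 m α := by
      intro m σ α
      have hperm : (Fin.cons 1 α : Fin (m+1) → ℕ) ∘ (Equiv.Perm.decomposeFin.symm (0, σ))
          = Fin.cons 1 (α ∘ σ) := by
        funext j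
        refine Fin.cases ?_ ?_ j
        · simp [Equiv.Perm.decomposeFin_symm_apply_zero]
        · intro i
          simp [Equiv.Perm.decomposeFin_symm_apply_succ]
      show G (m+1) (Fin.cons 1 (α ∘ σ)) = G (m+1) (Fin.cons 1 α)
      rw [← hperm]
      exact hG (m+1) _ _
    have hG2 : ∀ (m : ℕ) (σ : Equiv.Perm (Fin m)) (α : Fin m → ℕ), G2 m (α ∘ σ) = G2 m α := by
      intro m σ α
      show ∑ k : Fin m, G m (update (α ∘ σ) k ((α ∘ σ) k + 1))
        = ∑ k : Fin m, G m (update α k (α k + 1))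
      have hupd : ∀ k, update (α ∘ σ) k ((α ∘ σ) k + 1)
          = update α (σ k) (α (σ k) + 1) ∘ σ := by
        intro k
        have := update_comp_equiv α σ (σ k) (α (σ k) + 1)
        simp only [Equiv.symm_apply_apply] at this
        exact this.symm
      calc ∑ k : Fin m, G m (update (α ∘ σ) k ((α ∘ σ) k + 1))
          = ∑ k : Fin m, G m (update α (σ k) (α (σ k) + 1)) := by
            refine Finset.sum_congr rfl (fun k _ => ?_)
            rw [hupd k]
            exact hG m σ _
        _ = ∑ k : Fin m, G m (update α k (α k + 1)) :=
            Equiv.sum_comp σ (fun j => G m (update α j (α j + 1)))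
    -- decompose the sum over ordered finpartitions of p+1
    have hL : ∑ c : OrderedFinpartition (p+1), G c.length c.partSize
        = ∑ c : OrderedFinpartition p, (G1 c.length c.partSize + G2 c.length c.partSize) := by
      rw [← Fintype.sum_equiv (OrderedFinpartition.extendEquiv p)
        (fun x => G ((OrderedFinpartition.extendEquiv p x).length)
          ((OrderedFinpartition.extendEquiv p x).partSize))
        (fun c => G c.length c.partSize) (fun x => rfl)]
      rw [← Finset.univ_sigma_univ, Finset.sum_sigma]
      refine Finset.sum_congr rfl (fun c _ => ?_)
      rw [Fintype.sum_option]
      rfl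
    rw [hL, Finset.sum_add_distrib, ih G1 hG1, ih G2 hG2]
    -- step A plus symmetrization, for the G1 part
    have hA : ∀ m : ℕ, ∑ α ∈ P m p, (p ! : ℝ) / (m ! * ∏ i, ((α i)! : ℝ)) * G1 m α
        = ∑ β ∈ P (m+1) (p+1),
            ((t1 β : ℝ) * p !) / (((m+1)! : ℝ) * ∏ j, ((β j)! : ℝ)) * G (m+1) β := by
      intro m
      rw [stepA p m (fun β => G (m+1) β)]
      have hF : ∀ (σ : Equiv.Perm (Fin (m+1))) (β : Fin (m+1) → ℕ),
          (fun β => (p ! : ℝ) / (m ! * ∏ j, ((β j)! : ℝ)) * G (m+1) β) (β ∘ σ)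
          = (fun β => (p ! : ℝ) / (m ! * ∏ j, ((β j)! : ℝ)) * G (m+1) β) β := by
        intro σ β
        simp only
        have hp : ∏ j, (((β ∘ σ) j)! : ℝ) = ∏ j, ((β j)! : ℝ) :=
          Equiv.prod_comp σ (fun j => ((β j)! : ℝ))
        rw [hG (m+1) σ β, hp]
      have h := symmetrize (p+1) m
        (fun β => (p ! : ℝ) / (m ! * ∏ j, ((β j)! : ℝ)) * G (m+1) β) hF
      refine mul_left_cancel₀ (a := ((m+1 : ℕ) : ℝ)) (by positivity) ?_
      rw [h, Finset.mul_sum]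
      refine Finset.sum_congr rfl (fun β hβ => ?_)
      have hne2 : (∏ j, ((β j)! : ℝ)) ≠ 0 :=
        Finset.prod_ne_zero_iff.mpr (fun j _ => Nat.cast_ne_zero.mpr (Nat.factorial_ne_zero _))
      have hmf : ((m ! : ℕ) : ℝ) ≠ 0 := Nat.cast_ne_zero.mpr (Nat.factorial_ne_zero m)
      push_cast [Nat.factorial_succ]
      field_simp
    -- step B plus counting, for the G2 part
    have hB : ∀ m : ℕ, ∑ α ∈ P m p, (p ! : ℝ) / (m ! * ∏ i, ((α i)! : ℝ)) * G2 m α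
        = ∑ β ∈ P m (p+1),
            (((p:ℝ) + 1 - (t1 β : ℝ)) * p !) / ((m ! : ℝ) * ∏ j, ((β j)! : ℝ)) * G m β := by
      intro m
      have h1 : ∑ α ∈ P m p, (p ! : ℝ) / (m ! * ∏ i, ((α i)! : ℝ)) * G2 m α
          = ∑ α ∈ P m p, ∑ k : Fin m,
              (p ! : ℝ) / (m ! * ∏ i, ((α i)! : ℝ)) * G m (update α k (α k + 1)) := by
        refine Finset.sum_congr rfl (fun α _ => ?_)
        rw [hG2def, Finset.mul_sum]
      rw [h1, stepB p m (fun β => G m β)]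
      exact Finset.sum_congr rfl (fun β hβ => stepC p m (fun γ => G m γ) hβ)
    rw [Finset.sum_congr rfl (fun m _ => hA m), Finset.sum_congr rfl (fun m _ => hB m)]
    -- reindex the G1 part
    have hshift : ∑ m ∈ Finset.range (p+1), ∑ β ∈ P (m+1) (p+1),
          ((t1 β : ℝ) * p !) / (((m+1)! : ℝ) * ∏ j, ((β j)! : ℝ)) * G (m+1) β
        = ∑ m ∈ Finset.range (p+2), ∑ β ∈ P m (p+1),
          ((t1 β : ℝ) * p !) / ((m ! : ℝ) * ∏ j, ((β j)! : ℝ)) * G m β := by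
      rw [Finset.sum_range_succ' (fun m => ∑ β ∈ P m (p+1),
        ((t1 β : ℝ) * p !) / ((m ! : ℝ) * ∏ j, ((β j)! : ℝ)) * G m β) (p+1)]
      rw [P_zero (Nat.succ_ne_zero p), Finset.sum_empty, add_zero]
    -- extend the G2 part by a vanishing term
    have hext : ∑ m ∈ Finset.range (p+1), ∑ β ∈ P m (p+1),
          (((p:ℝ) + 1 - (t1 β : ℝ)) * p !) / ((m ! : ℝ) * ∏ j, ((β j)! : ℝ)) * G m β
        = ∑ m ∈ Finset.range (p+2), ∑ β ∈ P m (p+1),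
          (((p:ℝ) + 1 - (t1 β : ℝ)) * p !) / ((m ! : ℝ) * ∏ j, ((β j)! : ℝ)) * G m β := by
      have hz : ∑ β ∈ P (p+1) (p+1),
          (((p:ℝ) + 1 - (t1 β : ℝ)) * p !) / (((p+1)! : ℝ) * ∏ j, ((β j)! : ℝ)) * G (p+1) β
          = 0 := by
        refine Finset.sum_eq_zero (fun β hβ => ?_)
        rw [mem_P] at hβ
        obtain ⟨hs, hpos⟩ := hβ
        have hone : ∀ k, β k = 1 := by
          intro k
          have h2 : (Finset.univ.erase k).card ≤ ∑ j ∈ Finset.univ.erase k, β j := by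
            have := Finset.card_nsmul_le_sum (Finset.univ.erase k) β 1 (fun i _ => hpos i)
            simpa using this
          have h3 : ∑ j ∈ Finset.univ.erase k, β j + β k = p + 1 := by
            rw [Finset.sum_erase_add _ _ (Finset.mem_univ k)]; exact hs
          have h4 : (Finset.univ.erase k).card = p := by
            simp [Finset.card_erase_of_mem]
          have := hpos k
          omega
        have ht : t1 β = p + 1 := by
          rw [t1]
          rw [Finset.filter_true_of_mem (fun j _ => hone j)]
          simp
        rw [ht]
        push_cast
        ring_nf
      conv_rhs => rw [Finset.sum_range_succ]
      rw [hz, add_zero]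
    rw [hshift, hext, ← Finset.sum_add_distrib]
    refine Finset.sum_congr rfl (fun m _ => ?_)
    rw [← Finset.sum_add_distrib]
    refine Finset.sum_congr rfl (fun β hβ => ?_)
    push_cast [Nat.factorial_succ]
    ring

private theorem part1 (f g : ℝ → ℝ) (hf : ContDiff ℝ (⊤ : ℕ∞) f) (hg : ContDiff ℝ (⊤ : ℕ∞) g)
    (p : ℕ) (x : ℝ) :
    iteratedDeriv p (f ∘ g) x =
      ∑ c : OrderedFinpartition p,
        iteratedDeriv c.length f (g x) * ∏ i, iteratedDeriv (c.partSize i) g x := by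
  have hf' : HasFTaylorSeriesUpTo (⊤ : ℕ∞) f (ftaylorSeries ℝ f) :=
    contDiff_iff_ftaylorSeries.mp (hf.of_le (by simp))
  have hg' : HasFTaylorSeriesUpTo (⊤ : ℕ∞) g (ftaylorSeries ℝ g) :=
    contDiff_iff_ftaylorSeries.mp (hg.of_le (by simp))
  have hcomp : HasFTaylorSeriesUpToOn ((⊤:ℕ∞) : WithTop ℕ∞) (f ∘ g)
      (fun y ↦ ((ftaylorSeries ℝ f) (g y)).taylorComp ((ftaylorSeries ℝ g) y)) Set.univ :=
    HasFTaylorSeriesUpToOn.comp ((hasFTaylorSeriesUpToOn_univ_iff).mpr hf')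
      ((hasFTaylorSeriesUpToOn_univ_iff).mpr hg') (Set.mapsTo_univ _ _)
  have heq : iteratedFDeriv ℝ p (f ∘ g) x
      = ((ftaylorSeries ℝ f) (g x)).taylorComp ((ftaylorSeries ℝ g) x) p := by
    rw [← iteratedFDerivWithin_univ]
    exact (hcomp.eq_iteratedFDerivWithin_of_uniqueDiffOn (by exact_mod_cast le_top)
      uniqueDiffOn_univ (Set.mem_univ x)).symm
  have hid : iteratedDeriv p (f ∘ g) x = iteratedFDeriv ℝ p (f ∘ g) x (fun _ ↦ (1:ℝ)) := rfl
  rw [hid, heq]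
  show (∑ c : OrderedFinpartition p,
      (ftaylorSeries ℝ f (g x)).compAlongOrderedFinpartition (ftaylorSeries ℝ g x) c)
        (fun _ ↦ (1:ℝ)) = _
  rw [ContinuousMultilinearMap.sum_apply]
  refine Finset.sum_congr rfl (fun c _ ↦ ?_)
  rw [FormalMultilinearSeries.compAlongOrderedFinpartition_apply]
  have hb : ∀ m : Fin c.length,
      c.applyOrderedFinpartition (fun m ↦ ftaylorSeries ℝ g x (c.partSize m)) (fun _ ↦ (1:ℝ)) m
      = iteratedDeriv (c.partSize m) g x := by
    intro m
    rfl
  set q := ftaylorSeries ℝ f (g x) c.length with hq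
  set b : Fin c.length → ℝ := fun m ↦ iteratedDeriv (c.partSize m) g x with hbdef
  have : q (c.applyOrderedFinpartition (fun m ↦ ftaylorSeries ℝ g x (c.partSize m))
      (fun _ ↦ (1:ℝ))) = q b := rfl
  rw [this]
  have h2 : q (fun i ↦ b i • (fun _ : Fin c.length ↦ (1:ℝ)) i) = (∏ i, b i) • q (fun _ ↦ 1) :=
    q.map_smul_univ b (fun _ ↦ 1)
  have h3 : q b = (∏ i, b i) * q (fun _ ↦ 1) := by rw [smul_eq_mul] at h2; rw [← h2]; congr; ext i; simp
  rw [h3]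
  have h4 : q (fun _ ↦ (1:ℝ)) = iteratedDeriv c.length f (g x) := rfl
  rw [h4, mul_comm]


/-- Faà di Bruno's formula for the `p`-th derivative of a composition of smooth
functions of one real variable, as a sum over orders `m` and ordered tuples of
positive integers summing to `p`. -/
theorem faa_di_bruno (f g : ℝ → ℝ) (hf : ContDiff ℝ (⊤ : ℕ∞) f) (hg : ContDiff ℝ (⊤ : ℕ∞) g)
    (p : ℕ) (hp : 1 ≤ p) (x : ℝ) :
    iteratedDeriv p (f ∘ g) x =
      (p ! : ℝ) * ∑ m ∈ Finset.range (p + 1),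
        (iteratedDeriv m f (g x) / (m ! : ℝ)) *
          ∑ α ∈ (Finset.Nat.antidiagonalTuple m p).filter (fun α => ∀ i, 0 < α i),
            ∏ i, iteratedDeriv (α i) g x / ((α i)! : ℝ) := by
  have hG : ∀ (m : ℕ) (σ : Equiv.Perm (Fin m)) (α : Fin m → ℕ),
      (fun m (α : Fin m → ℕ) => iteratedDeriv m f (g x) * ∏ i, iteratedDeriv (α i) g x) m (α ∘ σ)
      = (fun m (α : Fin m → ℕ) => iteratedDeriv m f (g x) * ∏ i, iteratedDeriv (α i) g x) m α := by
    intro m σ α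
    simp only
    congr 1
    exact Equiv.prod_comp σ (fun i => iteratedDeriv (α i) g x)
  calc iteratedDeriv p (f ∘ g) x
      = ∑ c : OrderedFinpartition p,
          iteratedDeriv c.length f (g x) * ∏ i, iteratedDeriv (c.partSize i) g x :=
        part1 f g hf hg p x
    _ = ∑ m ∈ Finset.range (p+1), ∑ α ∈ P m p,
          (p ! : ℝ) / (m ! * ∏ i, ((α i)! : ℝ))
            * (iteratedDeriv m f (g x) * ∏ i, iteratedDeriv (α i) g x) :=
        key p (fun m α => iteratedDeriv m f (g x) * ∏ i, iteratedDeriv (α i) g x) hG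
    _ = (p ! : ℝ) * ∑ m ∈ Finset.range (p + 1),
          (iteratedDeriv m f (g x) / (m ! : ℝ)) *
            ∑ α ∈ (Finset.Nat.antidiagonalTuple m p).filter (fun α => ∀ i, 0 < α i),
              ∏ i, iteratedDeriv (α i) g x / ((α i)! : ℝ) := by
        rw [Finset.mul_sum]
        refine Finset.sum_congr rfl (fun m _ => ?_)
        rw [show (Finset.Nat.antidiagonalTuple m p).filter (fun α => ∀ i, 0 < α i) = P m p
          from rfl, Finset.mul_sum, Finset.mul_sum]
        refine Finset.sum_congr rfl (fun α _ => ?_)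
        rw [Finset.prod_div_distrib]
        have hne1 : ((m ! : ℕ) : ℝ) ≠ 0 := Nat.cast_ne_zero.mpr (Nat.factorial_ne_zero m)
        have hne2 : (∏ i, ((α i)! : ℝ)) ≠ 0 :=
          Finset.prod_ne_zero_iff.mpr
            (fun i _ => Nat.cast_ne_zero.mpr (Nat.factorial_ne_zero _))
        field_simp
end

section
/- The bilinear map ω(X,Y) = ∫ X'(x) Y''(x) dx on smooth periodic functions X, Y on the circle (vector fields on S¹) is skew-symmetric and satisfies the Lie algebra 2-cocycle condition ω([X,Y],Z) + ω([Y,Z],X) + ω([Z,X],Y) = 0, where [X,Y] = X'Y − XY' (Gelfand–Fuchs cocycle). -/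
open scoped ContDiff


/-- The Gelfand–Fuchs cocycle `ω(X,Y) = ∫ X' Y'' dx` over one period. -/
noncomputable def gfCocycle (X Y : ℝ → ℝ) : ℝ :=
  ∫ x in (0:ℝ)..(2 * Real.pi), deriv X x * iteratedDeriv 2 Y x

/-- The bracket `[X,Y] = X'Y − XY'` of vector fields on the circle. -/
noncomputable def vfBracket (X Y : ℝ → ℝ) : ℝ → ℝ :=
  fun x => deriv X x * Y x - X x * deriv Y x

private lemma deriv_cd {f : ℝ → ℝ} (hf : ContDiff ℝ ∞ f) : ContDiff ℝ ∞ (deriv f) :=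
  (contDiff_infty_iff_deriv.mp hf).2

private lemma periodic_deriv {f : ℝ → ℝ} (c : ℝ) (hf : Function.Periodic f c) :
    Function.Periodic (deriv f) c := by
  intro t
  have : (fun x => f (x + c)) = f := funext hf
  rw [← deriv_comp_add_const f c t, this]

private lemma it2 (f : ℝ → ℝ) : iteratedDeriv 2 f = deriv (deriv f) := by
  simp [iteratedDeriv_succ, iteratedDeriv_zero]

private lemma deriv_bracket {X Y : ℝ → ℝ} (hX : ContDiff ℝ ∞ X) (hY : ContDiff ℝ ∞ Y)
    (x : ℝ) :
    deriv (vfBracket X Y) x = iteratedDeriv 2 X x * Y x - X x * iteratedDeriv 2 Y x := by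
  have hX1 : DifferentiableAt ℝ X x := (hX.differentiable (by norm_num : (∞:WithTop ℕ∞) ≠ 0)) x
  have hY1 : DifferentiableAt ℝ Y x := (hY.differentiable (by norm_num : (∞:WithTop ℕ∞) ≠ 0)) x
  have hX2 : DifferentiableAt ℝ (deriv X) x := ((deriv_cd hX).differentiable (by norm_num : (∞:WithTop ℕ∞) ≠ 0)) x
  have hY2 : DifferentiableAt ℝ (deriv Y) x := ((deriv_cd hY).differentiable (by norm_num : (∞:WithTop ℕ∞) ≠ 0)) x
  rw [it2, it2]
  rw [show vfBracket X Y = fun x => deriv X x * Y x - X x * deriv Y x from rfl]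
  rw [deriv_fun_sub (f := fun x => deriv X x * Y x) (g := fun x => X x * deriv Y x) (hX2.mul hY1) (hX1.mul hY2), deriv_fun_mul hX2 hY1, deriv_fun_mul hX1 hY2]
  ring

/-- The Gelfand–Fuchs bilinear map `ω(X,Y) = ∫ X'Y'' dx` on smooth periodic functions
is skew-symmetric and satisfies the Lie algebra 2-cocycle identity for the bracket
`[X,Y] = X'Y − XY'`. -/
theorem gelfand_fuchs_cocycle (X Y Z : ℝ → ℝ)
    (hX : ContDiff ℝ (⊤ : ℕ∞) X) (hY : ContDiff ℝ (⊤ : ℕ∞) Y) (hZ : ContDiff ℝ (⊤ : ℕ∞) Z)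
    (hXp : Function.Periodic X (2 * Real.pi)) (hYp : Function.Periodic Y (2 * Real.pi))
    (hZp : Function.Periodic Z (2 * Real.pi)) :
    gfCocycle X Y = -gfCocycle Y X ∧
      gfCocycle (vfBracket X Y) Z + gfCocycle (vfBracket Y Z) X +
        gfCocycle (vfBracket Z X) Y = 0 := by
  have hX : ContDiff ℝ ∞ X := hX.of_le (by simp)
  have hY : ContDiff ℝ ∞ Y := hY.of_le (by simp)
  have hZ : ContDiff ℝ ∞ Z := hZ.of_le (by simp)
  have hX' := deriv_cd hX
  have hY' := deriv_cd hY
  have hZ' := deriv_cd hZ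
  have hX'' := deriv_cd hX'
  have hY'' := deriv_cd hY'
  have hZ'' := deriv_cd hZ'
  constructor
  · -- skew symmetry
    have hsum : (∫ x in (0:ℝ)..(2 * Real.pi),
        (deriv X x * iteratedDeriv 2 Y x + deriv Y x * iteratedDeriv 2 X x)) = 0 := by
      have heq : ∀ x : ℝ, deriv X x * iteratedDeriv 2 Y x + deriv Y x * iteratedDeriv 2 X x
          = deriv (fun t => deriv X t * deriv Y t) x := by
        intro x
        rw [it2, it2, deriv_fun_mul ((hX'.differentiable (by norm_num : (∞:WithTop ℕ∞) ≠ 0)) x)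
          ((hY'.differentiable (by norm_num : (∞:WithTop ℕ∞) ≠ 0)) x)]
        ring
      rw [intervalIntegral.integral_congr (fun x _ => heq x)]
      rw [intervalIntegral.integral_deriv_eq_sub (f := fun t => deriv X t * deriv Y t)
        (fun x _ => ((hX'.differentiable (by norm_num : (∞:WithTop ℕ∞) ≠ 0)) x).mul ((hY'.differentiable (by norm_num : (∞:WithTop ℕ∞) ≠ 0)) x))]
      · have hp : Function.Periodic (fun t => deriv X t * deriv Y t) (2 * Real.pi) :=
          fun t => by simp only []; rw [periodic_deriv _ hXp t, periodic_deriv _ hYp t]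
        have := hp 0
        simp only [zero_add] at this
        rw [this]; ring
      · apply Continuous.intervalIntegrable
        have : deriv (fun t => deriv X t * deriv Y t)
            = fun t => deriv (deriv X) t * deriv Y t + deriv X t * deriv (deriv Y) t := by
          funext t
          rw [deriv_fun_mul ((hX'.differentiable (by norm_num : (∞:WithTop ℕ∞) ≠ 0)) t) ((hY'.differentiable (by norm_num : (∞:WithTop ℕ∞) ≠ 0)) t)]
        rw [this]
        exact ((hX''.continuous.mul hY'.continuous).add
          (hX'.continuous.mul hY''.continuous))
    have hint1 : IntervalIntegrable (fun x => deriv X x * iteratedDeriv 2 Y x)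
        MeasureTheory.volume 0 (2 * Real.pi) := by
      apply Continuous.intervalIntegrable
      rw [it2]; exact hX'.continuous.mul hY''.continuous
    have hint2 : IntervalIntegrable (fun x => deriv Y x * iteratedDeriv 2 X x)
        MeasureTheory.volume 0 (2 * Real.pi) := by
      apply Continuous.intervalIntegrable
      rw [it2]; exact hY'.continuous.mul hX''.continuous
    rw [intervalIntegral.integral_add hint1 hint2] at hsum
    unfold gfCocycle
    linarith
  · -- cocycle identity: the integrand cancels pointwise
    have key : ∀ (A B C : ℝ → ℝ), ContDiff ℝ ∞ A → ContDiff ℝ ∞ B →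
        gfCocycle (vfBracket A B) C = ∫ x in (0:ℝ)..(2 * Real.pi),
          (iteratedDeriv 2 A x * B x - A x * iteratedDeriv 2 B x) * iteratedDeriv 2 C x := by
      intro A B C hA hB
      unfold gfCocycle
      exact intervalIntegral.integral_congr fun x _ => by rw [deriv_bracket hA hB]
    rw [key X Y Z hX hY, key Y Z X hY hZ, key Z X Y hZ hX]
    have icont : ∀ (A B C : ℝ → ℝ), ContDiff ℝ ∞ A → ContDiff ℝ ∞ B → ContDiff ℝ ∞ C →
        IntervalIntegrable (fun x =>
          (iteratedDeriv 2 A x * B x - A x * iteratedDeriv 2 B x) * iteratedDeriv 2 C x)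
          MeasureTheory.volume 0 (2 * Real.pi) := by
      intro A B C hA hB hC
      apply Continuous.intervalIntegrable
      rw [it2, it2, it2]
      exact (((deriv_cd (deriv_cd hA)).continuous.mul hB.continuous).sub
        (hA.continuous.mul (deriv_cd (deriv_cd hB)).continuous)).mul
        (deriv_cd (deriv_cd hC)).continuous
    rw [← intervalIntegral.integral_add (icont X Y Z hX hY hZ) (icont Y Z X hY hZ hX),
      ← intervalIntegral.integral_add
        ((icont X Y Z hX hY hZ).add (icont Y Z X hY hZ hX)) (icont Z X Y hZ hX hY)]
    have : ∀ x : ℝ,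
        (iteratedDeriv 2 X x * Y x - X x * iteratedDeriv 2 Y x) * iteratedDeriv 2 Z x +
        (iteratedDeriv 2 Y x * Z x - Y x * iteratedDeriv 2 Z x) * iteratedDeriv 2 X x +
        (iteratedDeriv 2 Z x * X x - Z x * iteratedDeriv 2 X x) * iteratedDeriv 2 Y x = 0 :=
      fun x => by ring
    rw [intervalIntegral.integral_congr (fun x _ => this x)]
    simp
end

section
/- Let u : ℝ² → ℝ be smooth and let f(t,·) be a family of smooth diffeomorphisms of ℝ solving f_t(t,x) = u(t, f(t,x)). If u satisfies Burgers' equation u_t = −3 u u_x, then the momentum J(t,x) = f_x(t,x)² · f_t(t,x) is constant in t for each x. -/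
section aux

variable {E : Type*} [NormedAddCommGroup E] [NormedSpace ℝ E]

private lemma pd1 {F : ℝ × ℝ → E} (hF : ContDiff ℝ (⊤ : ℕ∞) F) (t x : ℝ) :
    HasDerivAt (fun s => F (s, x)) (fderiv ℝ F (t, x) (1, 0)) t := by
  have h1 : HasDerivAt (fun s : ℝ => (s, x)) ((1 : ℝ), (0 : ℝ)) t :=
    (hasDerivAt_id t).prodMk (hasDerivAt_const t x)
  exact ((hF.differentiable (by simp)) (t, x)).hasFDerivAt.comp_hasDerivAt t h1

private lemma pd2 {F : ℝ × ℝ → E} (hF : ContDiff ℝ (⊤ : ℕ∞) F) (t x : ℝ) :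
    HasDerivAt (fun y => F (t, y)) (fderiv ℝ F (t, x) (0, 1)) x := by
  have h1 : HasDerivAt (fun y : ℝ => (t, y)) ((0 : ℝ), (1 : ℝ)) x :=
    (hasDerivAt_const x t).prodMk (hasDerivAt_id x)
  exact ((hF.differentiable (by simp)) (t, x)).hasFDerivAt.comp_hasDerivAt x h1

private lemma pdt {F : ℝ × ℝ → ℝ} (hF : ContDiff ℝ (⊤ : ℕ∞) F) (t x : ℝ) (v : ℝ × ℝ) :
    HasDerivAt (fun s => fderiv ℝ F (s, x) v)
      (fderiv ℝ (fderiv ℝ F) (t, x) (1, 0) v) t := by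
  have hF' : ContDiff ℝ (⊤ : ℕ∞) (fderiv ℝ F) := hF.fderiv_right (by simp)
  have h := (pd1 hF' t x).clm_apply (hasDerivAt_const t v)
  simpa using h

private lemma pdx {F : ℝ × ℝ → ℝ} (hF : ContDiff ℝ (⊤ : ℕ∞) F) (t x : ℝ) (v : ℝ × ℝ) :
    HasDerivAt (fun y => fderiv ℝ F (t, y) v)
      (fderiv ℝ (fderiv ℝ F) (t, x) (0, 1) v) x := by
  have hF' : ContDiff ℝ (⊤ : ℕ∞) (fderiv ℝ F) := hF.fderiv_right (by simp)
  have h := (pd2 hF' t x).clm_apply (hasDerivAt_const x v)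
  simpa using h

end aux

/-- Along a flow `f` of a velocity field `u` solving Burgers' equation
`u_t = −3 u u_x`, the momentum `J(t,x) = f_x(t,x)² · f_t(t,x)` is constant in `t`. -/
theorem burgers_momentum_conserved
    (f u : ℝ → ℝ → ℝ)
    (hf : ContDiff ℝ (⊤ : ℕ∞) (fun p : ℝ × ℝ => f p.1 p.2))
    (hu : ContDiff ℝ (⊤ : ℕ∞) (fun p : ℝ × ℝ => u p.1 p.2))
    (hdiffeo : ∀ t, Function.Bijective (f t))
    (hfx : ∀ t x, 0 < deriv (f t) x)
    (hflow : ∀ t x, deriv (fun s => f s x) t = u t (f t x))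
    (hburgers : ∀ t x, deriv (fun s => u s x) t = -3 * u t x * deriv (u t) x) :
    ∀ (x t₁ t₂ : ℝ),
      (deriv (f t₁) x) ^ 2 * deriv (fun s => f s x) t₁
        = (deriv (f t₂) x) ^ 2 * deriv (fun s => f s x) t₂ := by
  intro x t₁ t₂
  set F : ℝ × ℝ → ℝ := fun p => f p.1 p.2 with hF
  set U : ℝ × ℝ → ℝ := fun p => u p.1 p.2 with hU
  -- identify the partial derivatives appearing in the statement with fderiv's of F
  have hfxF : ∀ t y, deriv (f t) y = fderiv ℝ F (t, y) (0, 1) := by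
    intro t y
    exact ((pd2 hf t y).congr_deriv rfl).deriv
  have hftF : ∀ t y, deriv (fun s => f s y) t = fderiv ℝ F (t, y) (1, 0) := by
    intro t y
    exact (pd1 hf t y).deriv
  have huxU : ∀ t y, deriv (u t) y = fderiv ℝ U (t, y) (0, 1) := by
    intro t y
    exact (pd2 hu t y).deriv
  have hutU : ∀ t y, deriv (fun s => u s y) t = fderiv ℝ U (t, y) (1, 0) := by
    intro t y
    exact (pd1 hu t y).deriv
  -- the flow equation in fderiv form
  have hflow' : ∀ t y, fderiv ℝ F (t, y) (1, 0) = u t (f t y) := by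
    intro t y; rw [← hftF]; exact hflow t y
  -- the function J whose constancy we prove
  set J : ℝ → ℝ := fun t => (fderiv ℝ F (t, x) (0, 1)) ^ 2 * fderiv ℝ F (t, x) (1, 0)
    with hJ
  have key : ∀ t, HasDerivAt J 0 t := by
    intro t
    set y : ℝ := f t x with hy
    set fx : ℝ := fderiv ℝ F (t, x) (0, 1) with hfx'
    set ux : ℝ := fderiv ℝ U (t, y) (0, 1) with hux'
    set ut : ℝ := fderiv ℝ U (t, y) (1, 0) with hut'
    -- derivative of t ↦ fx : use symmetry of 2nd derivative then compute x-derivative of f_t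
    have hsymm : IsSymmSndFDerivAt ℝ F (t, x) :=
      (hf.contDiffAt).isSymmSndFDerivAt ((by rw [minSmoothness_of_isRCLikeNormedField]; exact WithTop.coe_le_coe.mpr (le_top : (2 : ℕ∞) ≤ ⊤)))
    -- x-derivative of y ↦ f_t(t,y) = u t (f t y):
    have hcomp : HasDerivAt (fun z => u t (f t z)) (ux * fx) x := by
      have h1 : HasDerivAt (fun z : ℝ => ((t : ℝ), f t z)) ((0 : ℝ), fx) x := by
        have := pd2 hf t x
        exact (hasDerivAt_const x t).prodMk this
      have h2 := ((hu.differentiable (by simp)) (t, y)).hasFDerivAt.comp_hasDerivAt x h1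
      have h3 : fderiv ℝ U (t, y) ((0 : ℝ), fx) = ux * fx := by
        have : ((0 : ℝ), fx) = fx • ((0 : ℝ), (1 : ℝ)) := by simp
        rw [this, map_smul, smul_eq_mul, hux', mul_comm]
      rw [← h3]; exact h2
    have hAx : HasDerivAt (fun z => fderiv ℝ F (t, z) (1, 0)) (ux * fx) x := by
      have : (fun z => fderiv ℝ F (t, z) (1, 0)) = fun z => u t (f t z) := by
        funext z; exact hflow' t z
      rw [this]; exact hcomp
    have hmix : fderiv ℝ (fderiv ℝ F) (t, x) (1, 0) (0, 1) = ux * fx := by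
      rw [hsymm.eq]
      exact (pdx hf t x ((1 : ℝ), (0 : ℝ))).unique hAx
    have hA : HasDerivAt (fun s => fderiv ℝ F (s, x) (0, 1)) (ux * fx) t := by
      have := pdt hf t x ((0 : ℝ), (1 : ℝ))
      rwa [hmix] at this
    -- derivative of t ↦ f_t(t,x) = u t (f t x):
    have hcompt : HasDerivAt (fun s => u s (f s x)) (ut + u t y * ux) t := by
      have h1 : HasDerivAt (fun s : ℝ => (s, f s x)) ((1 : ℝ), u t y) t := by
        have h := pd1 hf t x
        rw [hflow' t x] at h
        exact (hasDerivAt_id t).prodMk h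
      have h2 := ((hu.differentiable (by simp)) (t, y)).hasFDerivAt.comp_hasDerivAt t h1
      have h3 : fderiv ℝ U (t, y) ((1 : ℝ), u t y) = ut + u t y * ux := by
        have : ((1 : ℝ), u t y) = ((1 : ℝ), (0 : ℝ)) + (u t y) • ((0 : ℝ), (1 : ℝ)) := by
          simp
        rw [this, map_add, map_smul, smul_eq_mul, hut', hux']
      rw [← h3]; exact h2
    have hB : HasDerivAt (fun s => fderiv ℝ F (s, x) (1, 0)) (ut + u t y * ux) t := by
      have : (fun s => fderiv ℝ F (s, x) (1, 0)) = fun s => u s (f s x) := by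
        funext s; exact hflow' s x
      rw [this]; exact hcompt
    -- assemble
    have hJt : HasDerivAt J
        (2 * fx ^ 1 * (ux * fx) * fderiv ℝ F (t, x) (1, 0)
          + fx ^ 2 * (ut + u t y * ux)) t := by
      exact ((hA.pow 2).mul hB)
    have hzero : 2 * fx ^ 1 * (ux * fx) * fderiv ℝ F (t, x) (1, 0)
        + fx ^ 2 * (ut + u t y * ux) = 0 := by
      have hBval : fderiv ℝ F (t, x) (1, 0) = u t y := hflow' t x
      have hbur : ut = -3 * u t y * ux := by
        rw [hut', ← hutU, hburgers t y, huxU]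
      rw [hBval, hbur]; ring
    rw [hzero] at hJt
    exact hJt
  have hconst : J t₁ = J t₂ := by
    have hdiff : Differentiable ℝ J := fun t => (key t).differentiableAt
    have hderiv : ∀ t, deriv J t = 0 := fun t => (key t).deriv
    exact is_const_of_deriv_eq_zero hdiff hderiv t₁ t₂
  rw [hfxF, hfxF, hftF, hftF]
  exact hconst
end

section
/- Let f : ℝ² → ℝ be smooth with f_x(t,x) > 0 for all (t,x), each f(t,·) a diffeomorphism of ℝ, and suppose f satisfies the geodesic equation f_tt = −2 f_t f_tx / f_x. Then u(t,x) := f_t(t, f(t,·)⁻¹(x)) satisfies Burgers' equation u_t = −3 u_x u. -/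
/-- The Eulerian velocity `u(t,x) = f_t(t, f(t,·)⁻¹(x))` of a time-dependent
diffeomorphism `f`, where `g t` is the inverse of `f t`. -/
noncomputable def eulerianVel (f g : ℝ → ℝ → ℝ) (t x : ℝ) : ℝ :=
  deriv (fun s => f s (g t x)) t


open Filter ContinuousLinearMap

private lemma clm_decomp (L : ℝ × ℝ →L[ℝ] ℝ) (a b : ℝ) :
    L (a, b) = a * L (1, 0) + b * L (0, 1) := by
  have h : (a, b) = a • ((1:ℝ), (0:ℝ)) + b • ((0:ℝ), (1:ℝ)) := by
    simp [Prod.ext_iff]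
  rw [h, map_add, map_smul, map_smul, smul_eq_mul, smul_eq_mul]

private lemma hasDerivAt_pfst {h : ℝ × ℝ → ℝ} {s y : ℝ} (hd : DifferentiableAt ℝ h (s, y)) :
    HasDerivAt (fun s' => h (s', y)) (fderiv ℝ h (s, y) (1, 0)) s := by
  have hc : HasDerivAt (fun s' : ℝ => ((s' : ℝ), y)) (1, 0) s :=
    (hasDerivAt_id s).prodMk (hasDerivAt_const s y)
  simpa [Function.comp_def] using hd.hasFDerivAt.comp_hasDerivAt s hc

private lemma hasDerivAt_psnd {h : ℝ × ℝ → ℝ} {s y : ℝ} (hd : DifferentiableAt ℝ h (s, y)) :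
    HasDerivAt (fun y' => h (s, y')) (fderiv ℝ h (s, y) (0, 1)) y := by
  have hc : HasDerivAt (fun y' : ℝ => ((s : ℝ), y')) (0, 1) y :=
    (hasDerivAt_const y s).prodMk (hasDerivAt_id y)
  simpa [Function.comp_def] using hd.hasFDerivAt.comp_hasDerivAt y hc

/-- If `f` is a smooth family of increasing diffeomorphisms of `ℝ` solving the
geodesic equation `f_tt = −2 f_t f_tx / f_x`, then the right-trivialized velocity
`u(t,x) = f_t(t, f(t,·)⁻¹(x))` satisfies Burgers' equation `u_t = −3 u_x u`. -/
theorem geodesic_gives_burgers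
    (f g : ℝ → ℝ → ℝ)
    (hf : ContDiff ℝ (⊤ : ℕ∞) (fun p : ℝ × ℝ => f p.1 p.2))
    (hfx : ∀ t x, 0 < deriv (f t) x)
    (hinv : ∀ t, Function.LeftInverse (g t) (f t) ∧ Function.RightInverse (g t) (f t))
    (hgeo : ∀ t x, deriv (fun s => deriv (fun s' => f s' x) s) t
        = -2 * deriv (fun s => f s x) t * deriv (fun y => deriv (fun s => f s y) t) x
            / deriv (f t) x) :
    ∀ t x, deriv (fun s => eulerianVel f g s x) t
      = -3 * deriv (fun y => eulerianVel f g t y) x * eulerianVel f g t x := by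
  intro t x
  set F2 : ℝ × ℝ → ℝ := fun p => f p.1 p.2 with hF2
  have hF2d : Differentiable ℝ F2 := hf.differentiable (by simp)
  set ft : ℝ × ℝ → ℝ := fun q => fderiv ℝ F2 q (1, 0) with hftdef
  have hftC : ContDiff ℝ (⊤ : ℕ∞) ft := (hf.fderiv_right (by simp)).clm_apply contDiff_const
  have hftd : Differentiable ℝ ft := hftC.differentiable (by simp)
  have hright : ∀ s y, f s (g s y) = y := fun s y => (hinv s).2 y
  have hleft : ∀ s y, g s (f s y) = y := fun s y => (hinv s).1 y
  -- derivative of f in t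
  have hder_t : ∀ s y, HasDerivAt (fun s' => f s' y) (ft (s, y)) s := fun s y =>
    hasDerivAt_pfst (hF2d (s, y))
  -- derivative of f in x
  have hder_x : ∀ s y, HasDerivAt (f s) (fderiv ℝ F2 (s, y) (0, 1)) y := fun s y =>
    hasDerivAt_psnd (hF2d (s, y))
  have hEV : ∀ s y, eulerianVel f g s y = ft (s, g s y) := fun s y =>
    (hder_t s (g s y)).deriv
  set a := g t x with ha
  set p : ℝ × ℝ := (t, a) with hp
  set A := ft p with hA
  set B := fderiv ℝ F2 p (0, 1) with hB
  set C := fderiv ℝ ft p (1, 0) with hC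
  set D := fderiv ℝ ft p (0, 1) with hD
  have hBpos : 0 < B := by
    show (0:ℝ) < fderiv ℝ F2 (t, a) (0, 1)
    rw [← (hder_x t a).deriv]; exact hfx t a
  have hBne : B ≠ 0 := ne_of_gt hBpos
  -- geodesic equation at (t, a)
  have hgeoC : C = -2 * A * D / B := by
    have h1 : deriv (fun s => deriv (fun s' => f s' a) s) t = C := by
      have he : (fun s => deriv (fun s' => f s' a) s) = fun s => ft (s, a) :=
        funext fun s => (hder_t s a).deriv
      rw [he]
      exact (hasDerivAt_pfst (hftd (t, a))).deriv
    have h2 : deriv (fun s => f s a) t = A := (hder_t t a).deriv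
    have h3 : deriv (fun y => deriv (fun s => f s y) t) a = D := by
      have he : (fun y => deriv (fun s => f s y) t) = fun y => ft (t, y) :=
        funext fun y => (hder_t t y).deriv
      rw [he]
      exact (hasDerivAt_psnd (hftd (t, a))).deriv
    have h4 : deriv (f t) a = B := (hder_x t a).deriv
    have := hgeo t a
    rwa [h1, h2, h3, h4] at this
  -- inverse function theorem: joint differentiability of G at (t, x)
  set F : ℝ × ℝ → ℝ × ℝ := fun q => (q.1, F2 q) with hFdef
  set G : ℝ × ℝ → ℝ × ℝ := fun q => (q.1, g q.1 q.2) with hGdef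
  have hGF : ∀ q, G (F q) = q := by
    intro q
    simp only [hFdef, hGdef, hleft]
    exact Prod.ext rfl (hleft q.1 q.2)
  set L : ℝ × ℝ →L[ℝ] ℝ × ℝ :=
    (ContinuousLinearMap.fst ℝ ℝ ℝ).prod (fderiv ℝ F2 p) with hLdef
  have hLF : HasFDerivAt F L p := (hasFDerivAt_fst).prodMk (hF2d p).hasFDerivAt
  have hFC : ContDiff ℝ (⊤ : ℕ∞) F := contDiff_fst.prodMk hf
  have hFs : HasStrictFDerivAt F L p := by
    have h := (hFC.contDiffAt (x := p)).hasStrictFDerivAt (by simp)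
    rwa [hLF.fderiv] at h
  set M : ℝ × ℝ →L[ℝ] ℝ × ℝ :=
    (ContinuousLinearMap.fst ℝ ℝ ℝ).prod
      (B⁻¹ • (ContinuousLinearMap.snd ℝ ℝ ℝ - A • ContinuousLinearMap.fst ℝ ℝ ℝ)) with hMdef
  have hLq : ∀ q : ℝ × ℝ, L q = (q.1, A * q.1 + B * q.2) := by
    intro q
    have := clm_decomp (fderiv ℝ F2 p) q.1 q.2
    simp only [hLdef, ContinuousLinearMap.prod_apply, ContinuousLinearMap.coe_fst']
    rw [Prod.ext_iff]
    refine ⟨rfl, ?_⟩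
    simpa [mul_comm] using this
  have hMq : ∀ q : ℝ × ℝ, M q = (q.1, B⁻¹ * (q.2 - A * q.1)) := by
    intro q
    simp [hMdef, mul_comm]
  have hlinv : Function.LeftInverse M L := by
    intro q
    rw [hLq q, hMq (q.1, A * q.1 + B * q.2)]
    field_simp
    exact Prod.ext rfl (by rw [div_eq_iff hBne]; ring)
  have hrinv : Function.RightInverse M L := by
    intro q
    rw [hMq q, hLq (q.1, B⁻¹ * (q.2 - A * q.1))]
    refine Prod.ext rfl ?_
    field_simp
    ring
  set e : (ℝ × ℝ) ≃L[ℝ] (ℝ × ℝ) := ContinuousLinearEquiv.equivOfInverse L M hlinv hrinv with hedef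
  have hFse : HasStrictFDerivAt F (e : (ℝ × ℝ) →L[ℝ] (ℝ × ℝ)) p := hFs
  have hGs : HasStrictFDerivAt G ((e.symm : (ℝ × ℝ) →L[ℝ] (ℝ × ℝ))) (F p) :=
    hFse.to_local_left_inverse (Filter.Eventually.of_forall hGF)
  have hFp : F p = (t, x) := by
    simp only [hFdef, hp, hF2]
    exact Prod.ext rfl (hright t x)
  have hGd : DifferentiableAt ℝ G (t, x) := by
    rw [← hFp]; exact hGs.differentiableAt
  -- derivative of g in t
  have hcurve_t : HasDerivAt (fun s : ℝ => ((s : ℝ), x)) (1, 0) t :=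
    (hasDerivAt_id t).prodMk (hasDerivAt_const t x)
  have hGt : HasDerivAt (fun s => G (s, x)) (fderiv ℝ G (t, x) (1, 0)) t := by
    simpa [Function.comp_def] using hGd.hasFDerivAt.comp_hasDerivAt t hcurve_t
  set gt := (fderiv ℝ G (t, x) (1, 0)).2 with hgtdef
  have hgt : HasDerivAt (fun s => g s x) gt t := by
    simpa [Function.comp_def] using (ContinuousLinearMap.snd ℝ ℝ ℝ).hasFDerivAt.comp_hasDerivAt t hGt
  -- derivative of g in x
  have hcurve_x : HasDerivAt (fun y : ℝ => ((t : ℝ), y)) (0, 1) x :=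
    (hasDerivAt_const x t).prodMk (hasDerivAt_id x)
  have hGx : HasDerivAt (fun y => G (t, y)) (fderiv ℝ G (t, x) (0, 1)) x := by
    simpa [Function.comp_def] using hGd.hasFDerivAt.comp_hasDerivAt x hcurve_x
  set gx := (fderiv ℝ G (t, x) (0, 1)).2 with hgxdef
  have hgx : HasDerivAt (fun y => g t y) gx x := by
    simpa [Function.comp_def] using (ContinuousLinearMap.snd ℝ ℝ ℝ).hasFDerivAt.comp_hasDerivAt x hGx
  -- curves into the plane
  have hcin_t : HasDerivAt (fun s => ((s : ℝ), g s x)) (1, gt) t :=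
    (hasDerivAt_id t).prodMk hgt
  have hcin_x : HasDerivAt (fun y => ((t : ℝ), g t y)) (0, gx) x :=
    (hasDerivAt_const x t).prodMk hgx
  -- value of gt : from f s (g s x) = x
  have hgt_val : A + gt * B = 0 := by
    have h1 : HasDerivAt (fun s => F2 (s, g s x)) (fderiv ℝ F2 p (1, gt)) t := by
      simpa [Function.comp_def] using (hF2d p).hasFDerivAt.comp_hasDerivAt t hcin_t
    have h2 : (fun s => F2 (s, g s x)) = fun _ => x := funext fun s => hright s x
    rw [h2] at h1
    have h3 := h1.unique (hasDerivAt_const t x)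
    rw [clm_decomp (fderiv ℝ F2 p) 1 gt] at h3
    show fderiv ℝ F2 p (1, 0) + gt * fderiv ℝ F2 p (0, 1) = 0
    linarith [h3]
  -- value of gx : from f t (g t y) = y
  have hgx_val : gx * B = 1 := by
    have h1 : HasDerivAt (fun y => F2 (t, g t y)) (fderiv ℝ F2 p (0, gx)) x := by
      simpa [Function.comp_def] using (hF2d p).hasFDerivAt.comp_hasDerivAt x hcin_x
    have h2 : (fun y => F2 (t, g t y)) = fun y => y := funext fun y => hright t y
    rw [h2] at h1
    have h3 := h1.unique (hasDerivAt_id x)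
    rw [clm_decomp (fderiv ℝ F2 p) 0 gx] at h3
    show gx * fderiv ℝ F2 p (0, 1) = 1
    linarith [h3]
  -- compute LHS
  have hLHS : deriv (fun s => eulerianVel f g s x) t = C + gt * D := by
    have he : (fun s => eulerianVel f g s x) = fun s => ft (s, g s x) :=
      funext fun s => hEV s x
    rw [he]
    have h1 : HasDerivAt (fun s => ft (s, g s x)) (fderiv ℝ ft p (1, gt)) t := by
      simpa [Function.comp_def] using (hftd p).hasFDerivAt.comp_hasDerivAt t hcin_t
    rw [h1.deriv, clm_decomp (fderiv ℝ ft p) 1 gt, ← hC, ← hD]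
    ring
  -- compute u_x
  have hUX : deriv (fun y => eulerianVel f g t y) x = gx * D := by
    have he : (fun y => eulerianVel f g t y) = fun y => ft (t, g t y) :=
      funext fun y => hEV t y
    rw [he]
    have h1 : HasDerivAt (fun y => ft (t, g t y)) (fderiv ℝ ft p (0, gx)) x := by
      simpa [Function.comp_def] using (hftd p).hasFDerivAt.comp_hasDerivAt x hcin_x
    rw [h1.deriv, clm_decomp (fderiv ℝ ft p) 0 gx, ← hC, ← hD]
    ring
  have hU : eulerianVel f g t x = A := hEV t x
  rw [hLHS, hUX, hU]
  have hgt' : gt = -A / B := by field_simp at hgt_val ⊢; linarith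
  have hgx' : gx = 1 / B := by field_simp at hgx_val ⊢; linarith
  rw [hgeoC, hgt', hgx']
  field_simp
  ring
end

section
/- Let g ∈ 𝒮(ℝ) be a Schwartz function with g'(x) > −1 for all x, so that φ(x) = x + g(x) is a diffeomorphism of ℝ. If moreover g'(x) ≥ −1+ε for some ε > 0, then the inverse diffeomorphism has the form φ⁻¹(y) = y + h(y) where h is again a Schwartz function. -/
/-!
Since `g` is bounded and `φ' = 1 + g' ≥ ε`, the map `φ = id + g` is a homeomorphism of `ℝ`, and
its inverse `ψ` is smooth with `ψ' = F ∘ ψ`, where `F = 1 / φ'`. From `F' = -g'' F²` and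
`0 < F ≤ 1 / ε`, all derivatives of `F` are bounded; Faà di Bruno's bound for `F ∘ ψ` then shows
inductively that all derivatives of `ψ'` are bounded. Together with `|ψ y - y| ≤ sup |g|` this
makes `ψ` a function of temperate growth, so `h = -g ∘ ψ` is a Schwartz function, and
`ψ = id + h`.
-/

open Filter Finset Function
open scoped ContDiff Nat

lemma Finset.exists_uniform_bound {ι α β : Type*} [Preorder β] [IsDirectedOrder β] [Nonempty β]
    (s : Finset ι) {v : ι → α → β} (h : ∀ i ∈ s, ∃ C, ∀ x, v i x ≤ C) :
    ∃ C, ∀ i ∈ s, ∀ x, v i x ≤ C := by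
  have hbdd : BddAbove (⋃ i ∈ (s : Set ι), Set.range (v i)) :=
    (s.finite_toSet.bddAbove_biUnion).2 fun i hi ↦
      let ⟨C, hC⟩ := h i hi
      ⟨C, Set.forall_mem_range.2 hC⟩
  obtain ⟨C, hC⟩ := hbdd
  exact ⟨C, fun i hi x ↦ hC (Set.mem_biUnion (s := (s : Set ι)) hi ⟨x, rfl⟩)⟩

lemma norm_iteratedFDeriv_succ_eq_norm_iteratedFDeriv_deriv {F : Type*} [NormedAddCommGroup F]
    [NormedSpace ℝ F] (f : ℝ → F) (n : ℕ) (x : ℝ) :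
    ‖iteratedFDeriv ℝ (n + 1) f x‖ = ‖iteratedFDeriv ℝ n (deriv f) x‖ := by
  simp only [norm_iteratedFDeriv_eq_norm_iteratedDeriv, iteratedDeriv_succ']

section Leibniz

variable {E 𝔸 : Type*} [NormedAddCommGroup E] [NormedSpace ℝ E] [NormedRing 𝔸] [NormedAlgebra ℝ 𝔸]

lemma norm_iteratedFDeriv_mul_le_of_forall_le {f g : E → 𝔸} (hf : ContDiff ℝ ∞ f)
    (hg : ContDiff ℝ ∞ g) {n : ℕ} {x : E} {C D : ℝ}
    (hfC : ∀ i ≤ n, ‖iteratedFDeriv ℝ i f x‖ ≤ C) (hgD : ∀ i ≤ n, ‖iteratedFDeriv ℝ i g x‖ ≤ D) :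
    ∀ i ≤ n, ‖iteratedFDeriv ℝ i (fun y ↦ f y * g y) x‖ ≤ 2 ^ n * C * D := by
  intro i hi
  have hC : 0 ≤ C := (norm_nonneg _).trans (hfC 0 (Nat.zero_le n))
  have hD : 0 ≤ D := (norm_nonneg _).trans (hgD 0 (Nat.zero_le n))
  calc ‖iteratedFDeriv ℝ i (fun y ↦ f y * g y) x‖
      ≤ ∑ j ∈ range (i + 1), (i.choose j : ℝ) * ‖iteratedFDeriv ℝ j f x‖ *
          ‖iteratedFDeriv ℝ (i - j) g x‖ :=
        norm_iteratedFDeriv_mul_le hf hg x (mod_cast le_top)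
    _ ≤ ∑ j ∈ range (i + 1), (i.choose j : ℝ) * C * D := by
        gcongr with j hj
        · exact hfC j ((Nat.lt_succ_iff.1 (mem_range.1 hj)).trans hi)
        · exact hgD (i - j) ((Nat.sub_le i j).trans hi)
    _ = 2 ^ i * C * D := by
        rw [← Finset.sum_mul, ← Finset.sum_mul, ← Nat.cast_sum, Nat.sum_range_choose]
        push_cast
        rfl
    _ ≤ 2 ^ n * C * D := by gcongr; norm_num

end Leibniz

section BoundedDerivatives

variable {E F : Type*} [NormedAddCommGroup E] [NormedSpace ℝ E] [NormedAddCommGroup F]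
  [NormedSpace ℝ F]

def BoundedIteratedFDeriv (f : E → F) : Prop :=
  ∀ n : ℕ, ∃ C, ∀ x, ‖iteratedFDeriv ℝ n f x‖ ≤ C

lemma BoundedIteratedFDeriv.exists_norm_le {f : E → F} (hf : BoundedIteratedFDeriv f) :
    ∃ C, ∀ x, ‖f x‖ ≤ C := by
  simpa only [norm_iteratedFDeriv_zero] using hf 0

lemma BoundedIteratedFDeriv.exists_bound_le {f : E → F} (hf : BoundedIteratedFDeriv f) (n : ℕ) :
    ∃ C, ∀ i ≤ n, ∀ x, ‖iteratedFDeriv ℝ i f x‖ ≤ C := by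
  simpa only [mem_Iic] using (Iic n).exists_uniform_bound fun i _ ↦ hf i

lemma SchwartzMap.boundedIteratedFDeriv (f : SchwartzMap E F) : BoundedIteratedFDeriv f :=
  fun n ↦ ⟨SchwartzMap.seminorm ℝ 0 n f, SchwartzMap.norm_iteratedFDeriv_le_seminorm ℝ f n⟩

lemma boundedIteratedFDeriv_deriv {f : ℝ → F} (hf : BoundedIteratedFDeriv f) :
    BoundedIteratedFDeriv (deriv f) := fun n ↦ by
  simpa only [norm_iteratedFDeriv_succ_eq_norm_iteratedFDeriv_deriv] using hf (n + 1)

lemma BoundedIteratedFDeriv.inv {f : ℝ → ℝ} (hf : ContDiff ℝ ∞ f) {ε : ℝ} (hε : 0 < ε)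
    (hfε : ∀ x, ε ≤ f x) (hf' : BoundedIteratedFDeriv (deriv f)) :
    BoundedIteratedFDeriv fun x ↦ (f x)⁻¹ := by
  have hpos : ∀ x, 0 < f x := fun x ↦ hε.trans_le (hfε x)
  have hinv : ContDiff ℝ ∞ fun x ↦ (f x)⁻¹ := hf.inv fun x ↦ (hpos x).ne'
  have hderiv : deriv (fun x ↦ (f x)⁻¹) = fun x ↦ -deriv f x * ((f x)⁻¹ * (f x)⁻¹) := by
    funext x
    rw [deriv_fun_inv'' (hf.differentiable (by simp) x) (hpos x).ne']
    field_simp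
  intro n
  induction n using Nat.strong_induction_on with | _ n ih
  cases n with
  | zero =>
    refine ⟨ε⁻¹, fun x ↦ ?_⟩
    rw [norm_iteratedFDeriv_zero, norm_inv, Real.norm_of_nonneg (hpos x).le]
    exact inv_anti₀ hε (hfε x)
  | succ m =>
    obtain ⟨C, hC⟩ :=
      (Iic m).exists_uniform_bound fun i hi ↦ ih i (Nat.lt_succ_of_le (mem_Iic.1 hi))
    obtain ⟨B, hB⟩ := hf'.exists_bound_le m
    refine ⟨2 ^ m * B * (2 ^ m * C * C), fun x ↦ ?_⟩
    rw [norm_iteratedFDeriv_succ_eq_norm_iteratedFDeriv_deriv, hderiv]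
    have hsq := norm_iteratedFDeriv_mul_le_of_forall_le hinv hinv (fun i hi ↦ hC i (mem_Iic.2 hi) x)
      (fun i hi ↦ hC i (mem_Iic.2 hi) x)
    have hnegf' : ContDiff ℝ ∞ fun x ↦ -deriv f x := (hf.iterate_deriv 1).neg
    refine norm_iteratedFDeriv_mul_le_of_forall_le hnegf' (hinv.mul hinv) (fun i hi ↦ ?_) hsq m
      le_rfl
    rw [show (fun x ↦ -deriv f x) = -deriv f from rfl, iteratedFDeriv_neg_apply, norm_neg]
    exact hB i hi x

lemma boundedIteratedFDeriv_deriv_of_deriv_eq_comp {ψ F : ℝ → ℝ} (hψ : ContDiff ℝ ∞ ψ)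
    (hF : ContDiff ℝ ∞ F) (hFb : BoundedIteratedFDeriv F) (hψ' : deriv ψ = F ∘ ψ) :
    BoundedIteratedFDeriv (deriv ψ) := by
  intro n
  induction n using Nat.strong_induction_on with | _ n ih
  obtain ⟨C, hC⟩ := hFb.exists_bound_le n
  obtain ⟨D, hD⟩ := (Iio n).exists_uniform_bound fun i hi ↦ ih i (mem_Iio.1 hi)
  refine ⟨n ! * C * max D 1 ^ n, fun y ↦ ?_⟩
  rw [hψ']
  refine norm_iteratedFDeriv_comp_le hF hψ (mod_cast le_top) y (fun i hi ↦ hC i hi (ψ y))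
    fun i hi₁ hi₂ ↦ ?_
  obtain ⟨j, rfl⟩ := Nat.exists_eq_add_of_le' hi₁
  rw [norm_iteratedFDeriv_succ_eq_norm_iteratedFDeriv_deriv]
  calc ‖iteratedFDeriv ℝ j (deriv ψ) y‖
      ≤ max D 1 := (hD j (mem_Iio.2 hi₂) y).trans (le_max_left _ _)
    _ ≤ max D 1 ^ (j + 1) := le_self_pow₀ (le_max_right _ _) j.succ_ne_zero

lemma hasTemperateGrowth_of_boundedIteratedFDeriv_deriv {ψ : ℝ → F} (hψ : ContDiff ℝ ∞ ψ) {C : ℝ}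
    (hψC : ∀ y, ‖ψ y‖ ≤ C * (1 + ‖y‖)) (hψ' : BoundedIteratedFDeriv (deriv ψ)) :
    HasTemperateGrowth ψ := by
  refine ⟨hψ, fun n ↦ ?_⟩
  cases n with
  | zero => exact ⟨1, C, fun y ↦ by simpa only [norm_iteratedFDeriv_zero, pow_one] using hψC y⟩
  | succ m =>
    obtain ⟨B, hB⟩ := hψ' m
    exact ⟨0, B, fun y ↦ by
      simpa only [norm_iteratedFDeriv_succ_eq_norm_iteratedFDeriv_deriv, pow_zero, mul_one]
        using hB y⟩

end BoundedDerivatives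

lemma norm_le_one_add_mul_one_add_norm {E : Type*} [SeminormedAddCommGroup E] {x y : E} {C : ℝ}
    (h : ‖x - y‖ ≤ C) : ‖x‖ ≤ (1 + C) * (1 + ‖y‖) := by
  have hC : 0 ≤ C := (norm_nonneg _).trans h
  have hxy : ‖x‖ ≤ ‖y‖ + C := by
    simpa only [sub_add_cancel] using (norm_add_le (x - y) y).trans (by linarith)
  nlinarith [norm_nonneg y]

section PerturbationOfIdentity

variable {g : ℝ → ℝ}

lemma exists_homeomorph_coe_eq_id_add (hg : Continuous g) {C : ℝ} (hgC : ∀ x, ‖g x‖ ≤ C)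
    (hmono : StrictMono fun x ↦ x + g x) : ∃ e : ℝ ≃ₜ ℝ, ⇑e = fun x ↦ x + g x := by
  have hsurj : Surjective fun x ↦ x + g x :=
    (continuous_id.add hg).surjective
      (tendsto_atTop_add_right_of_le atTop (-C) tendsto_id fun x ↦ neg_le_of_abs_le (hgC x))
      (tendsto_atBot_add_right_of_ge atBot C tendsto_id fun x ↦ le_of_abs_le (hgC x))
  exact ⟨(hmono.orderIsoOfSurjective _ hsurj).toHomeomorph, rfl⟩

theorem exists_inverse_id_add_hasTemperateGrowth (hg : ContDiff ℝ ∞ g)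
    (hgb : BoundedIteratedFDeriv g) {ε : ℝ} (hε : 0 < ε) (hgε : ∀ x, ε ≤ 1 + deriv g x) :
    ∃ ψ : ℝ → ℝ, (∀ x, ψ (x + g x) = x) ∧ (∀ y, ψ y + g (ψ y) = y) ∧ HasTemperateGrowth ψ := by
  obtain ⟨C, hC⟩ := hgb.exists_norm_le
  have hpos : ∀ x, 0 < 1 + deriv g x := fun x ↦ hε.trans_le (hgε x)
  have hφ' : ∀ x, HasDerivAt (fun x ↦ x + g x) (1 + deriv g x) x := fun x ↦
    (hasDerivAt_id x).add (hg.differentiable (by simp) x).hasDerivAt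
  obtain ⟨e, he⟩ := exists_homeomorph_coe_eq_id_add hg.continuous hC
    (strictMono_of_deriv_pos fun x ↦ (hφ' x).deriv ▸ hpos x)
  have hψφ : ∀ x, e.symm (x + g x) = x := fun x ↦ by simpa only [he] using e.symm_apply_apply x
  have hφψ : ∀ y, e.symm y + g (e.symm y) = y := fun y ↦ by
    simpa only [he] using e.apply_symm_apply y
  have hψ : ContDiff ℝ ∞ e.symm :=
    e.contDiff_symm_deriv (fun x ↦ (hpos x).ne') (he ▸ hφ') (he ▸ contDiff_id.add hg)
  have hφ'_smooth : ContDiff ℝ ∞ fun x ↦ 1 + deriv g x := contDiff_const.add (hg.iterate_deriv 1)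
  have hψ' : deriv e.symm = (fun x ↦ (1 + deriv g x)⁻¹) ∘ e.symm := funext fun y ↦
    (HasDerivAt.of_local_left_inverse e.symm.continuous.continuousAt (he ▸ hφ' _) (hpos _).ne'
      (.of_forall e.apply_symm_apply)).deriv
  have hFb : BoundedIteratedFDeriv fun x ↦ (1 + deriv g x)⁻¹ := by
    refine BoundedIteratedFDeriv.inv hφ'_smooth hε hgε ?_
    rw [deriv_const_add']
    exact boundedIteratedFDeriv_deriv (boundedIteratedFDeriv_deriv hgb)
  have hψ_linear : ∀ y, ‖e.symm y‖ ≤ (1 + C) * (1 + ‖y‖) := fun y ↦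
    norm_le_one_add_mul_one_add_norm <| by
      rw [show e.symm y - y = -g (e.symm y) by linarith [hφψ y], norm_neg]
      exact hC _
  exact ⟨e.symm, hψφ, hφψ, hasTemperateGrowth_of_boundedIteratedFDeriv_deriv hψ hψ_linear
    (boundedIteratedFDeriv_deriv_of_deriv_eq_comp hψ (hφ'_smooth.inv fun x ↦ (hpos x).ne') hFb hψ')⟩

end PerturbationOfIdentity

theorem schwartz_diffeo_inverse_general (g : SchwartzMap ℝ ℝ) (ε : ℝ) (hε : 0 < ε)
    (hgε : ∀ x : ℝ, -1 + ε ≤ deriv (g : ℝ → ℝ) x) :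
    ∃ h : SchwartzMap ℝ ℝ,
      Function.LeftInverse (fun y => y + h y) (fun x => x + g x) ∧
      Function.RightInverse (fun y => y + h y) (fun x => x + g x) := by
  obtain ⟨ψ, hψφ, hφψ, hψ⟩ := exists_inverse_id_add_hasTemperateGrowth (g.smooth ⊤)
    g.boundedIteratedFDeriv hε fun x ↦ by linarith [hgε x]
  obtain ⟨C, hC⟩ := g.boundedIteratedFDeriv.exists_norm_le
  have hψ_eq : ∀ y, y + -g (ψ y) = ψ y := fun y ↦ by linarith [hφψ y]
  have hψ_upper : ∃ (k : ℕ) (C : ℝ), ∀ y, ‖y‖ ≤ C * (1 + ‖ψ y‖) ^ k :=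
    ⟨1, 1 + C, fun y ↦ by
      rw [pow_one]
      refine norm_le_one_add_mul_one_add_norm ?_
      rw [show y - ψ y = g (ψ y) by linarith [hφψ y]]
      exact hC _⟩
  refine ⟨-SchwartzMap.compCLM ℝ hψ hψ_upper g, fun x ↦ ?_, fun y ↦ ?_⟩
  · simp [hψφ x]
  · simp [hψ_eq y, hφψ y]

/-- If `g` is a Schwartz function with `g' > −1` everywhere (so `φ(x) = x + g(x)` is an
orientation-preserving diffeomorphism of `ℝ`) and moreover `g' ≥ −1 + ε` for some
`ε > 0`, then the inverse diffeomorphism is of the form `y ↦ y + h(y)` with `h` again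
a Schwartz function. -/
theorem schwartz_diffeo_inverse (g : SchwartzMap ℝ ℝ) (ε : ℝ) (hε : 0 < ε)
    (hg : ∀ x : ℝ, -1 < deriv (g : ℝ → ℝ) x)
    (hgε : ∀ x : ℝ, -1 + ε ≤ deriv (g : ℝ → ℝ) x) :
    ∃ h : SchwartzMap ℝ ℝ,
      Function.LeftInverse (fun y => y + h y) (fun x => x + g x) ∧
      Function.RightInverse (fun y => y + h y) (fun x => x + g x) :=
  schwartz_diffeo_inverse_general g ε hε hgε
end

section
/- For Schwartz functions f, g ∈ 𝒮(ℝ) with g'(x) > −1 for all x, the function x ↦ f(x + g(x)) is again a Schwartz function. -/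
/-! Composing a Schwartz function with `φ` stays Schwartz as soon as `φ` has temperate growth
and `‖x‖` is polynomially bounded in `‖φ x‖` (`SchwartzMap.compCLM`). For `φ x = x + g x` with
`g` Schwartz, the first holds because `g` and the identity have temperate growth, and the second
because `g` is bounded: `‖x‖ ≤ ‖x + g x‖ + sup ‖g‖`. -/

open SchwartzMap

theorem norm_le_one_add_mul_one_add_norm_add {E : Type*} [SeminormedAddCommGroup E]
    {x y : E} {C : ℝ} (hy : ‖y‖ ≤ C) : ‖x‖ ≤ (1 + C) * (1 + ‖x + y‖) := by
  have htri : ‖x‖ ≤ ‖x + y‖ + ‖y‖ := by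
    simpa using norm_sub_le (x + y) y
  nlinarith [norm_nonneg (x + y), norm_nonneg y]

namespace SchwartzMap

variable (𝕜 : Type*) {E F : Type*} [RCLike 𝕜]
  [NormedAddCommGroup E] [NormedSpace ℝ E] [NormedAddCommGroup F] [NormedSpace ℝ F]
  [NormedSpace 𝕜 F]

def compIdAddCLM (g : 𝓢(E, E)) : 𝓢(E, F) →L[𝕜] 𝓢(E, F) :=
  compCLM 𝕜 (Function.HasTemperateGrowth.id'.add g.hasTemperateGrowth)
    ⟨1, 1 + SchwartzMap.seminorm ℝ 0 0 g, fun x => by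
      simpa using norm_le_one_add_mul_one_add_norm_add (norm_le_seminorm ℝ g x)⟩

@[simp]
theorem compIdAddCLM_apply (g : 𝓢(E, E)) (f : 𝓢(E, F)) (x : E) :
    compIdAddCLM 𝕜 g f x = f (x + g x) :=
  rfl

end SchwartzMap

theorem schwartz_comp_shift_general (f g : SchwartzMap ℝ ℝ) :
    ∃ h : SchwartzMap ℝ ℝ, ∀ x : ℝ, h x = f (x + g x) :=
  ⟨compIdAddCLM ℝ g f, compIdAddCLM_apply ℝ g f⟩

/-- For Schwartz functions `f, g` with `g' > −1` everywhere, the composition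
`x ↦ f(x + g(x))` is again a Schwartz function. -/
theorem schwartz_comp_shift (f g : SchwartzMap ℝ ℝ)
    (hg : ∀ x : ℝ, -1 < deriv (g : ℝ → ℝ) x) :
    ∃ h : SchwartzMap ℝ ℝ, ∀ x : ℝ, h x = f (x + g x) :=
  schwartz_comp_shift_general f g
end

section
/- Let f : ℝ → ℝ be smooth, non-decreasing, with f ≡ 0 near −∞ and f ≡ 1 near +∞, and let 0 < λ < 1/max(f'). Then for each t, the map φ(t,·) : x ↦ x + f(t − λx) is a diffeomorphism of ℝ, and its energy satisfies ∫_{t₀}^{t₁} ∫_ℝ φ_t(t, φ(t,·)⁻¹(x))² dx dt ≤ (max f')²/λ · (t₁ − t₀) · ∫_{supp f'} (1 − λ f'(z)) dz. -/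
open MeasureTheory

/-- The compression wave `φ(t,x) = x + f(t − λx)` built from a non-decreasing smooth
function `f` with `f ≡ 0` near `−∞` and `f ≡ 1` near `+∞`, with `0 < λ < 1/max f'`:
each `φ(t,·)` is a diffeomorphism of `ℝ`, and its energy between times `t₀ ≤ t₁`
satisfies
`∫_{t₀}^{t₁} ∫_ℝ φ_t(t, φ(t,·)⁻¹(x))² dx dt ≤ (max f')²/λ · (t₁−t₀) · ∫_{supp f'} (1 − λ f')`. -/
theorem compression_wave_energy
    (f : ℝ → ℝ) (hf : ContDiff ℝ (⊤ : ℕ∞) f) (hmono : Monotone f)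
    (h0 : ∃ A : ℝ, ∀ x ≤ A, f x = 0) (h1 : ∃ B : ℝ, ∀ x, B ≤ x → f x = 1)
    (M lam : ℝ) (hM : ∀ z, deriv f z ≤ M) (hlam : 0 < lam) (hlamM : lam * M < 1) :
    (∀ t : ℝ, Function.Bijective (fun x : ℝ => x + f (t - lam * x))) ∧
    ∀ t₀ t₁ : ℝ, t₀ ≤ t₁ →
      (∫ t in t₀..t₁, ∫ x : ℝ,
          (deriv (fun s =>
              Function.invFun (fun y : ℝ => y + f (t - lam * y)) x
                + f (s - lam * Function.invFun (fun y : ℝ => y + f (t - lam * y)) x)) t) ^ 2)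
        ≤ M ^ 2 / lam * (t₁ - t₀) * ∫ z in tsupport (deriv f), (1 - lam * deriv f z) := by
  obtain ⟨A, hA⟩ := h0
  obtain ⟨B, hB⟩ := h1
  have hfd : Differentiable ℝ f := hf.differentiable (by simp)
  have hfc : Continuous f := hfd.continuous
  have hf'c : Continuous (deriv f) := hf.continuous_deriv (by simp)
  have hd0 : ∀ z, 0 ≤ deriv f z := by
    intro z
    have hda := (hfd z).hasDerivAt
    rw [hasDerivAt_iff_tendsto_slope] at hda
    have hsub : Set.Ioi z ⊆ ({z}ᶜ : Set ℝ) := fun y hy => hy.ne'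
    have h' : Filter.Tendsto (slope f z) (nhdsWithin z (Set.Ioi z)) (nhds (deriv f z)) :=
      hda.mono_left (nhdsWithin_mono z hsub)
    refine ge_of_tendsto h' ?_
    filter_upwards [self_mem_nhdsWithin] with y hy
    rw [slope_def_field]
    have hy' : z < y := hy
    exact div_nonneg (sub_nonneg.2 (hmono hy'.le)) (sub_nonneg.2 hy'.le)
  have hMpos : 0 ≤ M := le_trans (hd0 A) (hM A)
  have hpos : ∀ u : ℝ, 0 < 1 - lam * deriv f u := by
    intro u
    nlinarith [hd0 u, hM u]
  -- derivative in x of the wave map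
  have hg' : ∀ t x : ℝ, HasDerivAt (fun x : ℝ => x + f (t - lam * x))
      (1 - lam * deriv f (t - lam * x)) x := by
    intro t x
    have h1 : HasDerivAt (fun x : ℝ => t - lam * x) (-lam) x := by
      simpa using (((hasDerivAt_id x).const_mul lam).const_sub t)
    have h2 := ((hfd (t - lam * x)).hasDerivAt).comp x h1
    have h3 := (hasDerivAt_id x).add h2
    exact h3.congr_deriv (by ring)
  -- bounds for f
  have hf0 : ∀ x, 0 ≤ f x := by
    intro x
    rcases le_total x A with h | h
    · rw [hA x h]
    · rw [← hA A le_rfl]; exact hmono h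
  have hf1 : ∀ x, f x ≤ 1 := by
    intro x
    rcases le_total B x with h | h
    · rw [hB x h]
    · rw [← hB B le_rfl]; exact hmono h
  have hgc : ∀ t : ℝ, Continuous (fun x : ℝ => x + f (t - lam * x)) := by
    intro t
    exact continuous_id.add (hfc.comp (continuous_const.sub (continuous_const.mul continuous_id)))
  have hbij : ∀ t : ℝ, Function.Bijective (fun x : ℝ => x + f (t - lam * x)) := by
    intro t
    constructor
    · have hsm : StrictMono (fun x : ℝ => x + f (t - lam * x)) := by
        apply strictMono_of_deriv_pos
        intro x
        rw [(hg' t x).deriv]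
        exact hpos _
      exact hsm.injective
    · intro y
      have h₁ : (fun x : ℝ => x + f (t - lam * x)) (y - 1) ≤ y := by
        have := hf1 (t - lam * (y - 1)); simp only; linarith
      have h₂ : y ≤ (fun x : ℝ => x + f (t - lam * x)) y := by
        have := hf0 (t - lam * y); simp only; linarith
      have hy : y ∈ Set.Icc ((fun x : ℝ => x + f (t - lam * x)) (y - 1))
          ((fun x : ℝ => x + f (t - lam * x)) y) := ⟨h₁, h₂⟩
      obtain ⟨x, _, hx⟩ := intermediate_value_Icc (by linarith : y - 1 ≤ y)
        ((hgc t).continuousOn) hy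
      exact ⟨x, hx⟩
  refine ⟨hbij, ?_⟩
  intro t₀ t₁ ht
  -- support of deriv f is compact, contained in [A, B]
  have hd_out : ∀ x, x ∉ Set.Icc A B → deriv f x = 0 := by
    intro x hx
    rw [Set.mem_Icc, not_and_or, not_le, not_le] at hx
    rcases hx with hx | hx
    · have hev : f =ᶠ[nhds x] fun _ => (0 : ℝ) :=
        Filter.eventuallyEq_of_mem (Iio_mem_nhds hx) fun y hy => hA y (le_of_lt hy)
      rw [hev.deriv_eq, deriv_const]
    · have hev : f =ᶠ[nhds x] fun _ => (1 : ℝ) :=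
        Filter.eventuallyEq_of_mem (Ioi_mem_nhds hx) fun y hy => hB y (le_of_lt hy)
      rw [hev.deriv_eq, deriv_const]
  have hsupp : tsupport (deriv f) ⊆ Set.Icc A B := by
    apply closure_minimal _ isClosed_Icc
    intro x hx
    by_contra hxc
    exact hx (hd_out x hxc)
  have hScpt : IsCompact (tsupport (deriv f)) :=
    isCompact_Icc.of_isClosed_subset (isClosed_tsupport _) hsupp
  -- the function h in the z variable
  set h : ℝ → ℝ := fun z => (1 - lam * deriv f z) * (deriv f z) ^ 2 with hh
  have hhc : Continuous h := by
    apply Continuous.mul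
    · exact continuous_const.sub (continuous_const.mul hf'c)
    · exact hf'c.pow 2
  have hh0 : ∀ z, z ∉ tsupport (deriv f) → h z = 0 := by
    intro z hz
    have : deriv f z = 0 := image_eq_zero_of_notMem_tsupport hz
    simp [hh, this]
  -- inner integral is constant in time
  have hinner : ∀ t : ℝ, (∫ x : ℝ,
      (deriv (fun s =>
          Function.invFun (fun y : ℝ => y + f (t - lam * y)) x
            + f (s - lam * Function.invFun (fun y : ℝ => y + f (t - lam * y)) x)) t) ^ 2)
      = lam⁻¹ * ∫ z, h z := by
    intro t
    set ψ : ℝ → ℝ := Function.invFun (fun y : ℝ => y + f (t - lam * y)) with hψ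
    have hψl : ∀ y : ℝ, ψ ((fun y : ℝ => y + f (t - lam * y)) y) = y :=
      Function.leftInverse_invFun (hbij t).1
    -- rewrite the time derivative
    have hder : ∀ x : ℝ, deriv (fun s => ψ x + f (s - lam * ψ x)) t
        = deriv f (t - lam * ψ x) := by
      intro x
      have h1 : HasDerivAt (fun s : ℝ => s - lam * ψ x) 1 t := by
        simpa using (hasDerivAt_id t).sub_const (lam * ψ x)
      have h2 := ((hfd (t - lam * ψ x)).hasDerivAt).comp t h1
      have h3 := h2.const_add (ψ x)
      simpa using h3.deriv
    have hrw : (fun x : ℝ => (deriv (fun s => ψ x + f (s - lam * ψ x)) t) ^ 2)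
        = fun x : ℝ => (deriv f (t - lam * ψ x)) ^ 2 := by
      funext x; rw [hder x]
    calc (∫ x : ℝ, (deriv (fun s => ψ x + f (s - lam * ψ x)) t) ^ 2)
        = ∫ x : ℝ, (deriv f (t - lam * ψ x)) ^ 2 := by rw [hrw]
      _ = ∫ y : ℝ, h (t - lam * y) := by
          have himg : (fun y : ℝ => y + f (t - lam * y)) '' Set.univ = Set.univ := by
            rw [Set.image_univ]
            exact (hbij t).2.range_eq
          have key := integral_image_eq_integral_abs_deriv_smul MeasurableSet.univ
            (fun x _ => (hg' t x).hasDerivWithinAt)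
            ((hbij t).1.injOn) (fun x => (deriv f (t - lam * ψ x)) ^ 2)
          rw [himg, Measure.restrict_univ] at key
          rw [key]
          congr 1
          funext y
          rw [hψl y, abs_of_pos (hpos _), smul_eq_mul]
      _ = ∫ y : ℝ, (fun z => h (t - z)) (lam * y) := by norm_num
      _ = |lam⁻¹| • ∫ z : ℝ, h (t - z) := by
          rw [Measure.integral_comp_mul_left (fun z => h (t - z)) lam]
      _ = lam⁻¹ * ∫ z, h z := by
          rw [integral_sub_left_eq_self h volume t, abs_of_pos (by positivity), smul_eq_mul]
  -- bound the z-integral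
  have hS : MeasurableSet (tsupport (deriv f)) := (isClosed_tsupport _).measurableSet
  have hint1 : IntegrableOn h (tsupport (deriv f)) volume :=
    hhc.continuousOn.integrableOn_compact hScpt
  have hint2 : IntegrableOn (fun z => M ^ 2 * (1 - lam * deriv f z)) (tsupport (deriv f)) volume :=
    (continuous_const.mul (continuous_const.sub (continuous_const.mul hf'c))).continuousOn.integrableOn_compact hScpt
  have hzb : (∫ z, h z) ≤ M ^ 2 * ∫ z in tsupport (deriv f), (1 - lam * deriv f z) := by
    rw [← setIntegral_eq_integral_of_forall_compl_eq_zero hh0 (μ := volume)]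
    rw [← integral_const_mul]
    apply setIntegral_mono_on hint1 hint2 hS
    intro z _
    have h1 := hd0 z
    have h2 := hM z
    have h3 := hpos z
    simp only [hh]
    have h4 : deriv f z ^ 2 ≤ M ^ 2 := pow_le_pow_left₀ h1 h2 2
    nlinarith [mul_le_mul_of_nonneg_left h4 h3.le]
  -- put it together
  have hrwt : (∫ t in t₀..t₁, ∫ x : ℝ,
      (deriv (fun s =>
          Function.invFun (fun y : ℝ => y + f (t - lam * y)) x
            + f (s - lam * Function.invFun (fun y : ℝ => y + f (t - lam * y)) x)) t) ^ 2)
      = (t₁ - t₀) * (lam⁻¹ * ∫ z, h z) := by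
    rw [intervalIntegral.integral_congr (g := fun _ => lam⁻¹ * ∫ z, h z)
      (fun t _ => hinner t)]
    simp only [intervalIntegral.integral_const, smul_eq_mul]
  rw [hrwt]
  have hlam' : (0 : ℝ) < lam⁻¹ := by positivity
  calc (t₁ - t₀) * (lam⁻¹ * ∫ z, h z)
      ≤ (t₁ - t₀) * (lam⁻¹ * (M ^ 2 * ∫ z in tsupport (deriv f), (1 - lam * deriv f z))) := by
        apply mul_le_mul_of_nonneg_left _ (by linarith)
        exact mul_le_mul_of_nonneg_left hzb (le_of_lt hlam')
    _ = M ^ 2 / lam * (t₁ - t₀) * ∫ z in tsupport (deriv f), (1 - lam * deriv f z) := by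
        field_simp
end

section
/- Consider the continuous linear operator T on the Fréchet space s of rapidly decreasing real sequences given by T(x₀, x₁, x₂, …) = (0, 1²x₁, 2²x₂, 3²x₃, …). Then the linear ODE x'(t) = T(x(t)) has no solution x : (−δ,δ) → s (for any δ > 0) with initial value x(0) = e_N (the N-th unit sequence) for any N ≥ 0: any candidate solution has coordinates x_n(t) = (n!/N!)² t^{n−N}/(n−N)! for n ≥ N, which for every t ≠ 0 fails to be rapidly decreasing. -/
/-!
Solving `x' = T x` coordinate by coordinate, `x_n` is determined by `x_{n-1}`, so a solution is
unique; the explicit curve `x_n(t) = (n!/N!)² t^{n-N}/(n-N)!` (for `n ≥ N`, and `0` below `N`)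
is one. Since `(N+m)!/N! ≥ m!`, its coordinates satisfy `|x_{N+m}(t)| ≥ m! |t|^m → ∞`, so for
`t ≠ 0` the sequence `x(t)` is not even bounded.
-/

/-- The continuous linear operator `T(x₀,x₁,x₂,…) = (0, 1²x₀, 2²x₁, 3²x₂, …)` on the
space of rapidly decreasing sequences (in coordinates: `(Tx)₀ = 0`,
`(Tx)_{n+1} = (n+1)² x_n`). -/
def seqOp (y : ℕ → ℝ) : ℕ → ℝ
  | 0 => 0
  | n + 1 => ((n + 1 : ℕ) : ℝ) ^ 2 * y n

/-- A sequence is rapidly decreasing if `n^k |x_n|` is bounded for each `k`. -/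
def RapidlyDecreasingSeq (y : ℕ → ℝ) : Prop :=
  ∀ k : ℕ, ∃ C : ℝ, ∀ n : ℕ, (n : ℝ) ^ k * |y n| ≤ C

open Nat Filter Topology

theorem eq_of_hasDerivAt_of_abs_lt {E : Type*} [NormedAddCommGroup E] [NormedSpace ℝ E]
    {f g f' : ℝ → E} {δ : ℝ}
    (hf : ∀ t, |t| < δ → HasDerivAt f (f' t) t) (hg : ∀ t, |t| < δ → HasDerivAt g (f' t) t)
    (h0 : f 0 = g 0) {t : ℝ} (ht : |t| < δ) : f t = g t := by
  have hδ : 0 < δ := (abs_nonneg t).trans_lt ht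
  refine isOpen_Ioo.eqOn_of_deriv_eq isPreconnected_Ioo
    (fun s hs => (hf s (abs_lt.2 hs)).differentiableAt.differentiableWithinAt)
    (fun s hs => (hg s (abs_lt.2 hs)).differentiableAt.differentiableWithinAt)
    (fun s hs => (hf s (abs_lt.2 hs)).deriv.trans (hg s (abs_lt.2 hs)).deriv.symm)
    (show (0 : ℝ) ∈ Set.Ioo (-δ) δ from ⟨neg_neg_iff_pos.2 hδ, hδ⟩) h0 (abs_lt.1 ht)

theorem eq_of_hasDerivAt_seqOp {x y : ℝ → ℕ → ℝ} {δ : ℝ}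
    (hx : ∀ t, |t| < δ → ∀ n, HasDerivAt (fun s => x s n) (seqOp (x t) n) t)
    (hy : ∀ t, |t| < δ → ∀ n, HasDerivAt (fun s => y s n) (seqOp (y t) n) t)
    (h0 : x 0 = y 0) {t : ℝ} (ht : |t| < δ) : x t = y t := by
  suffices ∀ n t, |t| < δ → x t n = y t n from funext fun n => this n t ht
  intro n
  induction n with
  | zero =>
    exact fun t ht => eq_of_hasDerivAt_of_abs_lt (fun s hs => hx s hs 0) (fun s hs => hy s hs 0)
      (congrFun h0 0) ht
  | succ n ih =>
    refine fun t ht => eq_of_hasDerivAt_of_abs_lt (g := fun s => y s (n + 1))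
      (fun s hs => hx s hs (n + 1))
      (fun s hs => ?_) (congrFun h0 (n + 1)) ht
    simpa only [seqOp, ih s hs] using hy s hs (n + 1)

noncomputable def unitSolution (N : ℕ) (t : ℝ) (n : ℕ) : ℝ :=
  if N ≤ n then ((n ! : ℝ) / N !) ^ 2 * t ^ (n - N) / (n - N)! else 0

theorem unitSolution_zero (N n : ℕ) : unitSolution N 0 n = if n = N then 1 else 0 := by
  rcases lt_trichotomy n N with h | rfl | h
  · simp [unitSolution, h.ne, h.not_ge]
  · simp [unitSolution, (factorial_pos n).ne']
  · simp [unitSolution, h.ne', h.le, Nat.sub_ne_zero_of_lt h]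

theorem hasDerivAt_unitSolution (N n : ℕ) (t : ℝ) :
    HasDerivAt (fun s => unitSolution N s n) (seqOp (unitSolution N t) n) t := by
  cases n with
  | zero =>
    simpa [unitSolution, seqOp] using hasDerivAt_const t (unitSolution N 0 0)
  | succ n =>
    by_cases hn : N ≤ n
    · obtain ⟨m, rfl⟩ := Nat.exists_eq_add_of_le hn
      have h := ((hasDerivAt_pow (m + 1) t).const_mul ((((N + m + 1)! : ℝ) / N !) ^ 2)).div_const
        ((m + 1)! : ℝ)
      have hfun : (fun s => unitSolution N s (N + m + 1))
          = fun s => (((N + m + 1)! : ℝ) / N !) ^ 2 * s ^ (m + 1) / (m + 1)! := by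
        funext s
        simp [unitSolution, show N ≤ N + m + 1 by omega, show N + m + 1 - N = m + 1 by omega]
      rw [hfun]
      refine h.congr_deriv ?_
      rw [seqOp, unitSolution, if_pos hn, Nat.add_sub_cancel_left, Nat.add_sub_cancel]
      push_cast [factorial_succ]
      field_simp
    · have hconst : (fun s => unitSolution N s (n + 1)) = fun _ => unitSolution N t (n + 1) := by
        funext s
        simp [unitSolution, Nat.sub_eq_zero_of_le (Nat.succ_le_of_lt (not_le.1 hn))]
      rw [hconst]
      simpa [seqOp, unitSolution, hn] using hasDerivAt_const t (unitSolution N t (n + 1))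

theorem factorial_mul_pow_le_abs_unitSolution (N m : ℕ) (t : ℝ) :
    (m ! : ℝ) * |t| ^ m ≤ |unitSolution N t (N + m)| := by
  have hfac : (m ! : ℝ) ≤ (N + m)! / N ! := by
    rw [le_div_iff₀ (by positivity)]
    exact_mod_cast mul_comm (m !) (N !) ▸
      Nat.le_of_dvd (factorial_pos _) (factorial_mul_factorial_dvd_factorial_add N m)
  simp only [unitSolution, le_add_iff_nonneg_right, zero_le, if_true, Nat.add_sub_cancel_left,
    abs_div, abs_mul, abs_pow, Nat.abs_cast]
  calc (m ! : ℝ) * |t| ^ m = (m ! : ℝ) ^ 2 * |t| ^ m / m ! := by field_simp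
    _ ≤ ((N + m)! / N !) ^ 2 * |t| ^ m / m ! := by gcongr

theorem tendsto_factorial_mul_pow_atTop {r : ℝ} (hr : 0 < r) :
    Tendsto (fun m : ℕ => (m ! : ℝ) * r ^ m) atTop atTop := by
  have h : Tendsto (fun m : ℕ => r⁻¹ ^ m / m !) atTop (𝓝[>] 0) :=
    tendsto_nhdsWithin_iff.2 ⟨FloorSemiring.tendsto_pow_div_factorial_atTop r⁻¹,
      Eventually.of_forall fun m => Set.mem_Ioi.2 (by positivity)⟩
  convert h.inv_tendsto_nhdsGT_zero using 1
  funext m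
  simp [inv_pow, div_eq_mul_inv, mul_comm]

theorem not_rapidlyDecreasingSeq_unitSolution (N : ℕ) {t : ℝ} (ht : t ≠ 0) :
    ¬ RapidlyDecreasingSeq (unitSolution N t) := by
  intro h
  obtain ⟨C, hC⟩ := h 0
  obtain ⟨m, hm⟩ := ((tendsto_factorial_mul_pow_atTop (abs_pos.2 ht)).eventually_gt_atTop C).exists
  have hbound := hC (N + m)
  rw [pow_zero, one_mul] at hbound
  linarith [factorial_mul_pow_le_abs_unitSolution N m t]

/-- The linear ODE `x'(t) = T(x(t))` in the Fréchet space `s` of rapidly decreasing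
sequences has no local solution with initial value the `N`-th unit sequence: there is
no curve `x` defined (and solving the ODE coordinatewise) on `(−δ,δ)` with values in
`s` and `x(0) = e_N`. -/
theorem no_local_solution_in_s (N : ℕ) (δ : ℝ) (hδ : 0 < δ) :
    ¬ ∃ x : ℝ → ℕ → ℝ,
      (∀ t : ℝ, |t| < δ → RapidlyDecreasingSeq (x t)) ∧
      (∀ n : ℕ, x 0 n = if n = N then 1 else 0) ∧
      (∀ t : ℝ, |t| < δ → ∀ n : ℕ, HasDerivAt (fun s => x s n) (seqOp (x t) n) t) := by
  rintro ⟨x, hs, h0, hd⟩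
  have hx : ∀ t, |t| < δ → x t = unitSolution N t := fun t ht =>
    eq_of_hasDerivAt_seqOp hd (fun s _ n => hasDerivAt_unitSolution N n s)
      (funext fun n => (h0 n).trans (unitSolution_zero N n).symm) ht
  have hhalf : |δ / 2| < δ := by rw [abs_of_pos (half_pos hδ)]; linarith
  exact not_rapidlyDecreasingSeq_unitSolution N (half_pos hδ).ne' (hx _ hhalf ▸ hs _ hhalf)
end
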